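/- arXiv:2101.00025 — 10 statements merged into one kernel-verified Lean document; each statement's English description precedes it below -/
import Mathlib

section
/- Suppose the initial data satisfy 0 < α(0) < 1/s − δ(0), δ(0) ≥ 0, Σ_{j=1}^{8s} γ_j(0) ≤ 1 − 1/s (i.e. u(0) ≥ 0), and 0 < β_j(0) < γ_j(0) for all 1 ≤ j ≤ 8s. Then each of the functions t ↦ α(t)·e^{(t/2)(1−1/s)}, t ↦ δ(t)·e^{t(1−1/s)}, t ↦ β_j(t)·e^{t(1+1/(2s))}, t ↦ u(t)·e^{t(1−1/s)}, t ↦ γ_j(t)·e^{t(1+1/(2s))}, t ↦ w(t)·e^{(t/2)(1−1/s)} where w(t) = 1/s − δ(t) − α(t), and t ↦ w_j(t)·e^{t(1+1/(2s))} where w_j(t) = γ_j(t) − β_j(t), has strictly positive derivative at every t > 0. In particular, for all t > 0 the quantities α(t), δ(t), β_j(t), u(t), γ_j(t), w(t), w_j(t) are all strictly positive, and α(t) > e^{−(t/2)(1−1/s)}·α(0). -/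
/-!
Multiply each quantity `q` of the system by the exponential `e^{c t}` whose rate `c` is the
constant part of the decay rate of `q`. After the substitutions `Γ = 1 - 1/s - u` and
`R = 1 + 1/(2s) - δ/2 - u`, the derivative of `q e^{c t}` becomes `e^{c t}` times a polynomial
in the quantities (the "drift"), which is a sum of products of nonnegative quantities containing a
positive term, as long as `α, β_j, γ_j - β_j, 1/s - δ - α > 0` and `δ, u ≥ 0`. For `u` this uses
that the chain of the `γ_j` telescopes: `Γ' = Γ u - γ_{8s}`.
So as long as no weighted quantity has dropped below its initial value, all of them increase, and
a continuous-induction argument over the finitely many weighted quantities shows that they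
increase strictly on `[0, ∞)`; positivity of the unweighted quantities follows.
-/

open Filter Topology

theorem HasDerivAt.eventually_lt_of_pos {f : ℝ → ℝ} {f' x : ℝ} (hf : HasDerivAt f f' x)
    (hf' : 0 < f') : ∀ᶠ y in 𝓝[>] x, f x < f y := by
  filter_upwards [(hasDerivAt_iff_tendsto_slope_left_right.1 hf).2.eventually
    (eventually_gt_nhds hf'), self_mem_nhdsWithin] with y hslope hxy
  exact (slope_pos_iff_of_le (le_of_lt hxy)).1 hslope

theorem HasDerivAt.mul_exp {f φ : ℝ → ℝ} {f' φ' t : ℝ} (hf : HasDerivAt f f' t)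
    (hφ : HasDerivAt φ φ' t) :
    HasDerivAt (fun x => f x * Real.exp (φ x)) (Real.exp (φ t) * (f' + φ' * f t)) t :=
  (hf.mul hφ.exp).congr_deriv (by ring)

theorem Finset.sum_Icc_ite_sub_one {M : Type*} [AddCommGroup M] (a : M) (f : ℕ → M) {n : ℕ}
    (hn : 1 ≤ n) :
    ∑ j ∈ Finset.Icc 1 n, (if j = 1 then a else f (j - 1))
      = a + ∑ j ∈ Finset.Icc 1 n, f j - f n := by
  induction n, hn using Nat.le_induction with
  | base => simp
  | succ n hn ih =>
    rw [Finset.sum_Icc_succ_top (by omega), ih, Finset.sum_Icc_succ_top (by omega),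
      if_neg (by omega), Nat.add_sub_cancel]
    abel

section ForwardInvariance

variable {ι : Type*} {I : Set ι} {g : ι → ℝ → ℝ} {a : ℝ}

theorem Set.Finite.forall_le_of_deriv_pos (hI : I.Finite)
    (hdiff : ∀ i ∈ I, ∀ t, a ≤ t → DifferentiableAt ℝ (g i) t)
    (hpos : ∀ t, a ≤ t → (∀ i ∈ I, g i a ≤ g i t) → ∀ i ∈ I, 0 < deriv (g i) t) :
    ∀ t, a ≤ t → ∀ i ∈ I, g i a ≤ g i t := by
  intro b hb
  set S := {t | ∀ i ∈ I, g i a ≤ g i t}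
  have hclosed : IsClosed (S ∩ Set.Icc a b) := by
    have hS : S ∩ Set.Icc a b
        = Set.Icc a b ∩ ⋂ i ∈ I, Set.Icc a b ∩ g i ⁻¹' Set.Ici (g i a) := by
      ext t; simp only [S, Set.mem_inter_iff, Set.mem_iInter, Set.mem_preimage, Set.mem_Ici,
        Set.mem_ofPred_eq]; aesop
    rw [hS]
    refine isClosed_Icc.inter (isClosed_biInter fun i hi => ?_)
    exact ContinuousOn.preimage_isClosed_of_isClosed
      (fun t ht => (hdiff i hi t ht.1).continuousAt.continuousWithinAt) isClosed_Icc isClosed_Ici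
  have hstep : ∀ x ∈ S ∩ Set.Ico a b, S ∈ 𝓝[>] x := by
    rintro x ⟨hxS, hax, -⟩
    have hinc : ∀ᶠ y in 𝓝[>] x, ∀ i ∈ I, g i x < g i y :=
      (eventually_all_finite hI).2 fun i hi =>
        (hdiff i hi x hax).hasDerivAt.eventually_lt_of_pos (hpos x hax hxS i hi)
    filter_upwards [hinc] with y hy i hi
    exact (hxS i hi).trans (hy i hi).le
  exact hclosed.Icc_subset_of_forall_mem_nhdsWithin (fun i _ => le_rfl) hstep ⟨hb, le_rfl⟩

theorem Set.Finite.strictMonoOn_of_deriv_pos (hI : I.Finite)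
    (hdiff : ∀ i ∈ I, ∀ t, a ≤ t → DifferentiableAt ℝ (g i) t)
    (hpos : ∀ t, a ≤ t → (∀ i ∈ I, g i a ≤ g i t) → ∀ i ∈ I, 0 < deriv (g i) t) :
    ∀ i ∈ I, StrictMonoOn (g i) (Set.Ici a) := by
  intro i hi
  refine _root_.strictMonoOn_of_deriv_pos (convex_Ici a)
    (fun t ht => (hdiff i hi t ht).continuousAt.continuousWithinAt) fun t ht => ?_
  rw [interior_Ici] at ht
  exact hpos t ht.le (hI.forall_le_of_deriv_pos hdiff hpos t ht.le) i hi

end ForwardInvariance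

theorem ite_pos_of_mem_Icc {p : ℝ} {f : ℕ → ℝ} {n j : ℕ} (hp : 0 < p)
    (hf : ∀ k ∈ Finset.Icc 1 n, 0 < f k) (hj : j ∈ Finset.Icc 1 n) :
    0 < if j = 1 then p else f (j - 1) := by
  split_ifs with hj1
  · exact hp
  · rw [Finset.mem_Icc] at hj
    exact hf _ (Finset.mem_Icc.2 ⟨by omega, by omega⟩)

structure IsConsensusSolution (s : ℕ) (α δ : ℝ → ℝ) (β γ : ℕ → ℝ → ℝ) (B Γ u R : ℝ → ℝ) :
    Prop where
  sum_β : ∀ t, B t = ∑ j ∈ Finset.Icc 1 (8*s), β j t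
  sum_γ : ∀ t, Γ t = ∑ j ∈ Finset.Icc 1 (8*s), γ j t
  u_eq : ∀ t, u t = 1 - 1/(s:ℝ) - Γ t
  R_eq : ∀ t, R t = 1 + 1/(2*(s:ℝ)) - δ t / 2 - u t
  hasDerivAt_α : ∀ t : ℝ, 0 ≤ t → HasDerivAt α (-(α t / 2) * (Γ t - B t) + δ t * B t) t
  hasDerivAt_δ : ∀ t : ℝ, 0 ≤ t →
    HasDerivAt δ ((α t / 2) * (Γ t - B t) + ((1/(s:ℝ) - α t - δ t)/2) * B t - δ t * Γ t) t
  hasDerivAt_β_one : ∀ t : ℝ, 0 ≤ t → HasDerivAt (β 1) (-(β 1 t) * R t + (α t / 2) * Γ t) t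
  hasDerivAt_β : ∀ j, 2 ≤ j → j ≤ 8*s → ∀ t : ℝ, 0 ≤ t →
    HasDerivAt (β j) (β (j-1) t - β j t * R t) t
  hasDerivAt_γ_one : ∀ t : ℝ, 0 ≤ t →
    HasDerivAt (γ 1) (-(γ 1 t) * R t + (1/(2*(s:ℝ)) - δ t / 2) * Γ t) t
  hasDerivAt_γ : ∀ j, 2 ≤ j → j ≤ 8*s → ∀ t : ℝ, 0 ≤ t →
    HasDerivAt (γ j) (γ (j-1) t - γ j t * R t) t

structure IsAdmissible (s : ℕ) (α δ : ℝ → ℝ) (β γ : ℕ → ℝ → ℝ) (u : ℝ → ℝ) (t : ℝ) : Prop where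
  α_pos : 0 < α t
  δ_nonneg : 0 ≤ δ t
  u_nonneg : 0 ≤ u t
  slack_pos : 0 < 1/(s:ℝ) - δ t - α t
  β_pos : ∀ j ∈ Finset.Icc 1 (8*s), 0 < β j t
  gap_pos : ∀ j ∈ Finset.Icc 1 (8*s), 0 < γ j t - β j t

noncomputable section

/-- Indexes the quantities whose weighted versions increase; `slack` is `w = 1/s - δ - α` and
`gap j` is `w_j = γ_j - β_j`. -/
inductive Component
  | α | δ | u | slack
  | β (j : ℕ) | γ (j : ℕ) | gap (j : ℕ)

namespace Component

def value (s : ℕ) (α δ : ℝ → ℝ) (β γ : ℕ → ℝ → ℝ) (u : ℝ → ℝ) : Component → ℝ → ℝ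
  | .α => α
  | .δ => δ
  | .u => u
  | .slack => fun x => 1/(s:ℝ) - δ x - α x
  | .β j => β j
  | .γ j => γ j
  | .gap j => fun x => γ j x - β j x

def exponent (s : ℕ) : Component → ℝ → ℝ
  | .α, x | .slack, x => x/2 * (1 - 1/(s:ℝ))
  | .δ, x | .u, x => x * (1 - 1/(s:ℝ))
  | _, x => x * (1 + 1/(2*(s:ℝ)))

def weighted (s : ℕ) (α δ : ℝ → ℝ) (β γ : ℕ → ℝ → ℝ) (u : ℝ → ℝ) (i : Component) (x : ℝ) : ℝ :=
  value s α δ β γ u i x * Real.exp (exponent s i x)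

def drift (s : ℕ) (α δ : ℝ → ℝ) (β γ : ℕ → ℝ → ℝ) (B Γ u : ℝ → ℝ) : Component → ℝ → ℝ
  | .α, t => α t / 2 * (u t + B t) + δ t * B t
  | .δ, t => α t / 2 * (Γ t - B t) + (1/(s:ℝ) - δ t - α t) / 2 * B t + δ t * u t
  | .u, t => u t ^ 2 + γ (8*s) t
  | .slack, t => δ t * (Γ t - B t) + (1/(s:ℝ) - δ t - α t) / 2 * (u t + (Γ t - B t))
  | .β j, t => (if j = 1 then α t / 2 * Γ t else β (j-1) t) + β j t * (δ t / 2 + u t)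
  | .γ j, t =>
    (if j = 1 then (1/(2*(s:ℝ)) - δ t / 2) * Γ t else γ (j-1) t) + γ j t * (δ t / 2 + u t)
  | .gap j, t =>
    (if j = 1 then (1/(s:ℝ) - δ t - α t) / 2 * Γ t else γ (j-1) t - β (j-1) t)
      + (γ j t - β j t) * (δ t / 2 + u t)

def active (s : ℕ) : Set Component :=
  {.α, .δ, .u, .slack} ∪ ⋃ j ∈ Finset.Icc 1 (8*s), {.β j, .γ j, .gap j}

theorem mem_active {s : ℕ} {i : Component} :
    i ∈ active s ↔ i = .α ∨ i = .δ ∨ i = .u ∨ i = .slack ∨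
      ∃ j ∈ Finset.Icc 1 (8*s), i = .β j ∨ i = .γ j ∨ i = .gap j := by
  simp [active, or_assoc]

theorem active_finite (s : ℕ) : (active s).Finite :=
  (Set.toFinite _).union ((Finset.finite_toSet _).biUnion fun _ _ => Set.toFinite _)

theorem hasDerivAt_exponent (s : ℕ) (i : Component) (t : ℝ) :
    HasDerivAt (exponent s i) (exponent s i 1) t := by
  cases i with
  | α | slack =>
    exact (((hasDerivAt_id t).div_const 2).mul_const _).congr_deriv (by simp [exponent])
  | δ | u => exact ((hasDerivAt_id t).mul_const _).congr_deriv (by simp [exponent])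
  | β | γ | gap => exact ((hasDerivAt_id t).mul_const _).congr_deriv (by simp [exponent])

variable {s : ℕ} {α δ : ℝ → ℝ} {β γ : ℕ → ℝ → ℝ} {u : ℝ → ℝ} {t : ℝ} {i : Component}

theorem weighted_zero : weighted s α δ β γ u i 0 = value s α δ β γ u i 0 := by
  cases i <;> simp [weighted, exponent]

theorem value_pos_of_le (h : weighted s α δ β γ u i 0 ≤ weighted s α δ β γ u i t)
    (h0 : 0 < value s α δ β γ u i 0) : 0 < value s α δ β γ u i t := by
  rw [weighted_zero] at h
  exact (mul_pos_iff_of_pos_right (Real.exp_pos _)).1 (h0.trans_le h)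

theorem value_nonneg_of_le (h : weighted s α δ β γ u i 0 ≤ weighted s α δ β γ u i t)
    (h0 : 0 ≤ value s α δ β γ u i 0) : 0 ≤ value s α δ β γ u i t := by
  rw [weighted_zero] at h
  exact (mul_nonneg_iff_of_pos_right (Real.exp_pos _)).1 (h0.trans h)

theorem value_pos_of_lt (h : weighted s α δ β γ u i 0 < weighted s α δ β γ u i t)
    (h0 : 0 ≤ value s α δ β γ u i 0) : 0 < value s α δ β γ u i t := by
  rw [weighted_zero] at h
  exact (mul_pos_iff_of_pos_right (Real.exp_pos _)).1 (h0.trans_lt h)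

end Component

end

namespace IsAdmissible

open Component

variable {s : ℕ} {α δ : ℝ → ℝ} {β γ : ℕ → ℝ → ℝ} {u : ℝ → ℝ} {t : ℝ}

theorem s_pos (h : IsAdmissible s α δ β γ u t) : 0 < s := by
  refine Nat.pos_of_ne_zero fun hs => ?_
  have := h.slack_pos
  simp only [hs, CharP.cast_eq_zero, div_zero] at this
  linarith [h.α_pos, h.δ_nonneg]

theorem γ_pos (h : IsAdmissible s α δ β γ u t) {j : ℕ} (hj : j ∈ Finset.Icc 1 (8*s)) :
    0 < γ j t := by
  linarith [h.β_pos j hj, h.gap_pos j hj]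

theorem value_nonneg (h : IsAdmissible s α δ β γ u t) {i : Component} (hi : i ∈ active s) :
    0 ≤ value s α δ β γ u i t := by
  rcases mem_active.1 hi with rfl | rfl | rfl | rfl | ⟨j, hj, rfl | rfl | rfl⟩
  exacts [h.α_pos.le, h.δ_nonneg, h.u_nonneg, h.slack_pos.le, (h.β_pos j hj).le,
    (h.γ_pos hj).le, (h.gap_pos j hj).le]

theorem of_weighted_le (h0 : IsAdmissible s α δ β γ u 0)
    (hle : ∀ i ∈ active s, weighted s α δ β γ u i 0 ≤ weighted s α δ β γ u i t) :
    IsAdmissible s α δ β γ u t := by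
  refine ⟨value_pos_of_le (hle .α (by simp [active])) h0.α_pos,
    value_nonneg_of_le (hle .δ (by simp [active])) h0.δ_nonneg,
    value_nonneg_of_le (hle .u (by simp [active])) h0.u_nonneg,
    value_pos_of_le (hle .slack (by simp [active])) h0.slack_pos,
    fun j hj => value_pos_of_le (hle (.β j) (by simpa [active] using hj)) (h0.β_pos j hj),
    fun j hj => value_pos_of_le (hle (.gap j) (by simpa [active] using hj)) (h0.gap_pos j hj)⟩

end IsAdmissible

namespace IsConsensusSolution

open Component

variable {s : ℕ} {α δ : ℝ → ℝ} {β γ : ℕ → ℝ → ℝ} {B Γ u R : ℝ → ℝ} {t : ℝ} {j : ℕ}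

theorem hasDerivAt_β_of_mem (h : IsConsensusSolution s α δ β γ B Γ u R)
    (hj : j ∈ Finset.Icc 1 (8*s)) (ht : 0 ≤ t) :
    HasDerivAt (β j) ((if j = 1 then α t / 2 * Γ t else β (j-1) t) - β j t * R t) t := by
  rcases eq_or_ne j 1 with rfl | hj1
  · exact (h.hasDerivAt_β_one t ht).congr_deriv (by simp only [if_true]; ring)
  · rw [if_neg hj1]
    rw [Finset.mem_Icc] at hj
    exact h.hasDerivAt_β j (by omega) hj.2 t ht

theorem hasDerivAt_γ_of_mem (h : IsConsensusSolution s α δ β γ B Γ u R)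
    (hj : j ∈ Finset.Icc 1 (8*s)) (ht : 0 ≤ t) :
    HasDerivAt (γ j)
      ((if j = 1 then (1/(2*(s:ℝ)) - δ t / 2) * Γ t else γ (j-1) t) - γ j t * R t) t := by
  rcases eq_or_ne j 1 with rfl | hj1
  · exact (h.hasDerivAt_γ_one t ht).congr_deriv (by simp only [if_true]; ring)
  · rw [if_neg hj1]
    rw [Finset.mem_Icc] at hj
    exact h.hasDerivAt_γ j (by omega) hj.2 t ht

/-- The sum over the chain `γ_{j-1} → γ_j` telescopes. -/
theorem hasDerivAt_Γ (h : IsConsensusSolution s α δ β γ B Γ u R) (hs : 0 < s) (ht : 0 ≤ t) :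
    HasDerivAt Γ (Γ t * u t - γ (8*s) t) t := by
  have hsum := HasDerivAt.fun_sum fun j (hj : j ∈ Finset.Icc 1 (8*s)) =>
    h.hasDerivAt_γ_of_mem hj ht
  rw [← funext h.sum_γ] at hsum
  refine hsum.congr_deriv ?_
  rw [Finset.sum_sub_distrib, Finset.sum_Icc_ite_sub_one _ (fun k => γ k t) (by omega),
    ← Finset.sum_mul, ← h.sum_γ, h.R_eq]
  ring

theorem hasDerivAt_value (h : IsConsensusSolution s α δ β γ B Γ u R) (hs : 0 < s)
    {i : Component} (hi : i ∈ active s) (ht : 0 ≤ t) :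
    HasDerivAt (value s α δ β γ u i)
      (drift s α δ β γ B Γ u i t - exponent s i 1 * value s α δ β γ u i t) t := by
  rcases mem_active.1 hi with rfl | rfl | rfl | rfl | ⟨j, hj, rfl | rfl | rfl⟩
  · exact (h.hasDerivAt_α t ht).congr_deriv (by simp only [drift, exponent, value, h.u_eq]; ring)
  · exact (h.hasDerivAt_δ t ht).congr_deriv (by simp only [drift, exponent, value, h.u_eq]; ring)
  · have hu : HasDerivAt u (0 - (Γ t * u t - γ (8*s) t)) t :=
      ((hasDerivAt_const t _).sub (h.hasDerivAt_Γ hs ht)).congr_of_eventuallyEq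
        (Eventually.of_forall h.u_eq)
    exact hu.congr_deriv (by simp only [drift, exponent, value]; rw [h.u_eq]; ring)
  · exact (((hasDerivAt_const t _).sub (h.hasDerivAt_δ t ht)).sub
      (h.hasDerivAt_α t ht)).congr_deriv (by simp only [drift, exponent, value, h.u_eq]; ring)
  · exact (h.hasDerivAt_β_of_mem hj ht).congr_deriv
      (by simp only [drift, exponent, value, h.R_eq]; ring)
  · exact (h.hasDerivAt_γ_of_mem hj ht).congr_deriv
      (by simp only [drift, exponent, value, h.R_eq]; ring)
  · exact ((h.hasDerivAt_γ_of_mem hj ht).sub (h.hasDerivAt_β_of_mem hj ht)).congr_deriv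
      (by simp only [drift, exponent, value, h.R_eq]; split_ifs <;> ring)

theorem hasDerivAt_weighted (h : IsConsensusSolution s α δ β γ B Γ u R) (hs : 0 < s)
    {i : Component} (hi : i ∈ active s) (ht : 0 ≤ t) :
    HasDerivAt (weighted s α δ β γ u i)
      (Real.exp (exponent s i t) * drift s α δ β γ B Γ u i t) t :=
  ((h.hasDerivAt_value hs hi ht).mul_exp (hasDerivAt_exponent s i t)).congr_deriv (by ring)

theorem drift_pos (h : IsConsensusSolution s α δ β γ B Γ u R)
    (hadm : IsAdmissible s α δ β γ u t) {i : Component} (hi : i ∈ active s) :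
    0 < drift s α δ β γ B Γ u i t := by
  have hne : (Finset.Icc 1 (8*s)).Nonempty :=
    ⟨1, Finset.mem_Icc.2 ⟨le_rfl, by linarith [hadm.s_pos]⟩⟩
  have hB : 0 < B t := h.sum_β t ▸ Finset.sum_pos hadm.β_pos hne
  have hΓB : 0 < Γ t - B t := by
    rw [h.sum_γ, h.sum_β, ← Finset.sum_sub_distrib]
    exact Finset.sum_pos hadm.gap_pos hne
  have hΓ : 0 < Γ t := by linarith
  have hα := hadm.α_pos
  have hδ := hadm.δ_nonneg
  have hu := hadm.u_nonneg
  have hw := hadm.slack_pos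
  have hV : 0 ≤ δ t / 2 + u t := by linarith
  rcases mem_active.1 hi with rfl | rfl | rfl | rfl | ⟨j, hj, rfl | rfl | rfl⟩
  · exact add_pos_of_pos_of_nonneg (mul_pos (half_pos hα) (by linarith)) (mul_nonneg hδ hB.le)
  · exact add_pos_of_pos_of_nonneg (add_pos_of_pos_of_nonneg (mul_pos (half_pos hα) hΓB)
      (mul_nonneg (half_pos hw).le hB.le)) (mul_nonneg hδ hu)
  · exact add_pos_of_nonneg_of_pos (sq_nonneg _)
      (hadm.γ_pos (Finset.mem_Icc.2 ⟨by linarith [hadm.s_pos], le_rfl⟩))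
  · exact add_pos_of_nonneg_of_pos (mul_nonneg hδ hΓB.le) (mul_pos (half_pos hw) (by linarith))
  · exact add_pos_of_pos_of_nonneg (ite_pos_of_mem_Icc (mul_pos (half_pos hα) hΓ) hadm.β_pos hj)
      (mul_nonneg (hadm.β_pos j hj).le hV)
  · have hinflow : 0 < 1/(2*(s:ℝ)) - δ t / 2 := by
      have : 1/(2*(s:ℝ)) = 1/(s:ℝ)/2 := by ring
      linarith
    exact add_pos_of_pos_of_nonneg
      (ite_pos_of_mem_Icc (mul_pos hinflow hΓ) (fun k hk => hadm.γ_pos hk) hj)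
      (mul_nonneg (hadm.γ_pos hj).le hV)
  · exact add_pos_of_pos_of_nonneg
      (ite_pos_of_mem_Icc (f := fun k => γ k t - β k t) (mul_pos (half_pos hw) hΓ)
        hadm.gap_pos hj)
      (mul_nonneg (hadm.gap_pos j hj).le hV)

theorem deriv_weighted_pos (h : IsConsensusSolution s α δ β γ B Γ u R)
    (hadm : IsAdmissible s α δ β γ u t) {i : Component} (hi : i ∈ active s) (ht : 0 ≤ t) :
    0 < deriv (weighted s α δ β γ u i) t := by
  rw [(h.hasDerivAt_weighted hadm.s_pos hi ht).deriv]
  exact mul_pos (Real.exp_pos _) (h.drift_pos hadm hi)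

end IsConsensusSolution

theorem stmt_0_general
    (s : ℕ)
    (α δ : ℝ → ℝ) (β γ : ℕ → ℝ → ℝ) (B Γ u R : ℝ → ℝ)
    (hB : ∀ t, B t = ∑ j ∈ Finset.Icc 1 (8*s), β j t)
    (hΓ : ∀ t, Γ t = ∑ j ∈ Finset.Icc 1 (8*s), γ j t)
    (hu : ∀ t, u t = 1 - 1/(s:ℝ) - Γ t)
    (hR : ∀ t, R t = 1 + 1/(2*(s:ℝ)) - δ t / 2 - u t)
    (hderivα : ∀ t : ℝ, 0 ≤ t → HasDerivAt α (-(α t / 2) * (Γ t - B t) + δ t * B t) t)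
    (hderivδ : ∀ t : ℝ, 0 ≤ t →
      HasDerivAt δ ((α t / 2) * (Γ t - B t) + ((1/(s:ℝ) - α t - δ t)/2) * B t - δ t * Γ t) t)
    (hderivβ1 : ∀ t : ℝ, 0 ≤ t → HasDerivAt (β 1) (-(β 1 t) * R t + (α t / 2) * Γ t) t)
    (hderivβ : ∀ j, 2 ≤ j → j ≤ 8*s → ∀ t : ℝ, 0 ≤ t →
      HasDerivAt (β j) (β (j-1) t - β j t * R t) t)
    (hderivγ1 : ∀ t : ℝ, 0 ≤ t →
      HasDerivAt (γ 1) (-(γ 1 t) * R t + (1/(2*(s:ℝ)) - δ t / 2) * Γ t) t)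
    (hderivγ : ∀ j, 2 ≤ j → j ≤ 8*s → ∀ t : ℝ, 0 ≤ t →
      HasDerivAt (γ j) (γ (j-1) t - γ j t * R t) t)
    (hα0 : 0 < α 0) (hα0' : α 0 < 1/(s:ℝ) - δ 0) (hδ0 : 0 ≤ δ 0)
    (hu0 : ∑ j ∈ Finset.Icc 1 (8*s), γ j 0 ≤ 1 - 1/(s:ℝ))
    (hβγ0 : ∀ j, 1 ≤ j → j ≤ 8*s → 0 < β j 0 ∧ β j 0 < γ j 0) :
    ∀ t : ℝ, 0 < t →
      (0 < deriv (fun x => α x * Real.exp ((x/2) * (1 - 1/(s:ℝ)))) t) ∧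
      (0 < deriv (fun x => δ x * Real.exp (x * (1 - 1/(s:ℝ)))) t) ∧
      (∀ j, 1 ≤ j → j ≤ 8*s →
        0 < deriv (fun x => β j x * Real.exp (x * (1 + 1/(2*(s:ℝ))))) t) ∧
      (0 < deriv (fun x => u x * Real.exp (x * (1 - 1/(s:ℝ)))) t) ∧
      (∀ j, 1 ≤ j → j ≤ 8*s →
        0 < deriv (fun x => γ j x * Real.exp (x * (1 + 1/(2*(s:ℝ))))) t) ∧
      (0 < deriv (fun x => (1/(s:ℝ) - δ x - α x) * Real.exp ((x/2) * (1 - 1/(s:ℝ)))) t) ∧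
      (∀ j, 1 ≤ j → j ≤ 8*s →
        0 < deriv (fun x => (γ j x - β j x) * Real.exp (x * (1 + 1/(2*(s:ℝ))))) t) ∧
      0 < α t ∧ 0 < δ t ∧
      (∀ j, 1 ≤ j → j ≤ 8*s → 0 < β j t ∧ 0 < γ j t ∧ 0 < γ j t - β j t) ∧
      0 < u t ∧ 0 < 1/(s:ℝ) - δ t - α t ∧
      Real.exp (-(t/2) * (1 - 1/(s:ℝ))) * α 0 < α t := by
  have hsol : IsConsensusSolution s α δ β γ B Γ u R :=
    ⟨hB, hΓ, hu, hR, hderivα, hderivδ, hderivβ1, hderivβ, hderivγ1, hderivγ⟩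
  have hβγ : ∀ j ∈ Finset.Icc 1 (8*s), 0 < β j 0 ∧ β j 0 < γ j 0 :=
    fun j hj => hβγ0 j (Finset.mem_Icc.1 hj).1 (Finset.mem_Icc.1 hj).2
  have hadm0 : IsAdmissible s α δ β γ u 0 :=
    ⟨hα0, hδ0, by rw [hu, hΓ]; linarith, by linarith, fun j hj => (hβγ j hj).1,
      fun j hj => sub_pos.2 (hβγ j hj).2⟩
  have hmono := (Component.active_finite s).strictMonoOn_of_deriv_pos
    (fun i hi t ht => (hsol.hasDerivAt_weighted hadm0.s_pos hi ht).differentiableAt)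
    (fun t ht hle i hi => hsol.deriv_weighted_pos (hadm0.of_weighted_le hle) hi ht)
  intro t ht
  have hlt : ∀ i ∈ Component.active s,
      Component.weighted s α δ β γ u i 0 < Component.weighted s α δ β γ u i t :=
    fun i hi => hmono i hi Set.self_mem_Ici ht.le ht
  have hadm := hadm0.of_weighted_le fun i hi => (hlt i hi).le
  have hd := fun i (hi : i ∈ Component.active s) => hsol.deriv_weighted_pos hadm hi ht.le
  have hv := fun i (hi : i ∈ Component.active s) =>
    Component.value_pos_of_lt (hlt i hi) (hadm0.value_nonneg hi)
  refine ⟨hd .α ?_, hd .δ ?_, fun j h1 h2 => hd (.β j) ?_, hd .u ?_, fun j h1 h2 => hd (.γ j) ?_,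
    hd .slack ?_, fun j h1 h2 => hd (.gap j) ?_, hv .α ?_, hv .δ ?_,
    fun j h1 h2 => ⟨hv (.β j) ?_, hv (.γ j) ?_, hv (.gap j) ?_⟩, hv .u ?_, hv .slack ?_, ?bound⟩
  case bound =>
    have h := hlt .α (by simp [Component.active])
    rw [Component.weighted_zero] at h
    rw [neg_mul, Real.exp_neg, inv_mul_eq_div, div_lt_iff₀ (Real.exp_pos _)]
    exact h
  all_goals simp [Component.active]
  all_goals omega

theorem stmt_0
    (s : ℕ) (hs : 2 ≤ s)
    (α δ : ℝ → ℝ) (β γ : ℕ → ℝ → ℝ) (B Γ u R : ℝ → ℝ)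
    (hB : ∀ t, B t = ∑ j ∈ Finset.Icc 1 (8*s), β j t)
    (hΓ : ∀ t, Γ t = ∑ j ∈ Finset.Icc 1 (8*s), γ j t)
    (hu : ∀ t, u t = 1 - 1/(s:ℝ) - Γ t)
    (hR : ∀ t, R t = 1 + 1/(2*(s:ℝ)) - δ t / 2 - u t)
    (hderivα : ∀ t : ℝ, 0 ≤ t → HasDerivAt α (-(α t / 2) * (Γ t - B t) + δ t * B t) t)
    (hderivδ : ∀ t : ℝ, 0 ≤ t →
      HasDerivAt δ ((α t / 2) * (Γ t - B t) + ((1/(s:ℝ) - α t - δ t)/2) * B t - δ t * Γ t) t)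
    (hderivβ1 : ∀ t : ℝ, 0 ≤ t → HasDerivAt (β 1) (-(β 1 t) * R t + (α t / 2) * Γ t) t)
    (hderivβ : ∀ j, 2 ≤ j → j ≤ 8*s → ∀ t : ℝ, 0 ≤ t →
      HasDerivAt (β j) (β (j-1) t - β j t * R t) t)
    (hderivγ1 : ∀ t : ℝ, 0 ≤ t →
      HasDerivAt (γ 1) (-(γ 1 t) * R t + (1/(2*(s:ℝ)) - δ t / 2) * Γ t) t)
    (hderivγ : ∀ j, 2 ≤ j → j ≤ 8*s → ∀ t : ℝ, 0 ≤ t →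
      HasDerivAt (γ j) (γ (j-1) t - γ j t * R t) t)
    (hα0 : 0 < α 0) (hα0' : α 0 < 1/(s:ℝ) - δ 0) (hδ0 : 0 ≤ δ 0)
    (hu0 : ∑ j ∈ Finset.Icc 1 (8*s), γ j 0 ≤ 1 - 1/(s:ℝ))
    (hβγ0 : ∀ j, 1 ≤ j → j ≤ 8*s → 0 < β j 0 ∧ β j 0 < γ j 0) :
    ∀ t : ℝ, 0 < t →
      (0 < deriv (fun x => α x * Real.exp ((x/2) * (1 - 1/(s:ℝ)))) t) ∧
      (0 < deriv (fun x => δ x * Real.exp (x * (1 - 1/(s:ℝ)))) t) ∧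
      (∀ j, 1 ≤ j → j ≤ 8*s →
        0 < deriv (fun x => β j x * Real.exp (x * (1 + 1/(2*(s:ℝ))))) t) ∧
      (0 < deriv (fun x => u x * Real.exp (x * (1 - 1/(s:ℝ)))) t) ∧
      (∀ j, 1 ≤ j → j ≤ 8*s →
        0 < deriv (fun x => γ j x * Real.exp (x * (1 + 1/(2*(s:ℝ))))) t) ∧
      (0 < deriv (fun x => (1/(s:ℝ) - δ x - α x) * Real.exp ((x/2) * (1 - 1/(s:ℝ)))) t) ∧
      (∀ j, 1 ≤ j → j ≤ 8*s →
        0 < deriv (fun x => (γ j x - β j x) * Real.exp (x * (1 + 1/(2*(s:ℝ))))) t) ∧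
      0 < α t ∧ 0 < δ t ∧
      (∀ j, 1 ≤ j → j ≤ 8*s → 0 < β j t ∧ 0 < γ j t ∧ 0 < γ j t - β j t) ∧
      0 < u t ∧ 0 < 1/(s:ℝ) - δ t - α t ∧
      Real.exp (-(t/2) * (1 - 1/(s:ℝ))) * α 0 < α t :=
  stmt_0_general s α δ β γ B Γ u R hB hΓ hu hR hderivα hderivδ hderivβ1 hderivβ hderivγ1 hderivγ hα0
    hα0' hδ0 hu0 hβγ0
end

section
/- At every time t ≥ 0 at which 1/s − δ(t) ≠ 0 and Γ(t) ≠ 0, the advantage variable ξ is differentiable and satisfies ξ'(t) = (δ(t)·Γ(t)/(1/s − δ(t)))·(η(t) − ξ(t)) + (Γ(t)/4)·(1 − ξ(t)²)·η(t). -/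
/-
Writing D = 1/s − δ, the advantage is ξ = 1 − 2α/D, so its derivative is a quotient-rule
computation from α' and δ'. Substituting α = D(1 − ξ)/2 and B = Γ(1 − η)/2 into the equations
for α' and δ' turns that derivative into the claimed expression in ξ and η.
-/

theorem HasDerivAt.sub_sub_two_mul_div_sub {a d : ℝ → ℝ} {a' d' c t : ℝ}
    (ha : HasDerivAt a a' t) (hd : HasDerivAt d d' t) (hD : c - d t ≠ 0) :
    HasDerivAt (fun x => (c - d x - 2 * a x) / (c - d x))
      (-2 * (a' * (c - d t) + a t * d') / (c - d t) ^ 2) t := by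
  have hden : HasDerivAt (fun x => c - d x) (-d') t := hd.const_sub c
  have hnum : HasDerivAt (fun x => c - d x - 2 * a x) (-d' - 2 * a') t :=
    hden.sub (ha.const_mul 2)
  exact (hnum.fun_div hden hD).congr_deriv (by ring)

theorem advantage_deriv_eq {c a δ B Γ : ℝ} (hD : c - δ ≠ 0) (hΓ : Γ ≠ 0) :
    -2 * ((-(a / 2) * (Γ - B) + δ * B) * (c - δ)
        + a * ((a / 2) * (Γ - B) + ((c - a - δ) / 2) * B - δ * Γ)) / (c - δ) ^ 2
      = (δ * Γ / (c - δ)) * ((Γ - 2 * B) / Γ - (c - δ - 2 * a) / (c - δ))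
        + (Γ / 4) * (1 - ((c - δ - 2 * a) / (c - δ)) ^ 2) * ((Γ - 2 * B) / Γ) := by
  field_simp
  ring

theorem stmt_2_general
    (s : ℕ)
    (α δ : ℝ → ℝ) (B Γ : ℝ → ℝ)
    (hderivα : ∀ t : ℝ, 0 ≤ t → HasDerivAt α (-(α t / 2) * (Γ t - B t) + δ t * B t) t)
    (hderivδ : ∀ t : ℝ, 0 ≤ t →
      HasDerivAt δ ((α t / 2) * (Γ t - B t) + ((1/(s:ℝ) - α t - δ t)/2) * B t - δ t * Γ t) t)
    (ξ η : ℝ → ℝ)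
    (hξ : ∀ t, ξ t = (1/(s:ℝ) - δ t - 2 * α t) / (1/(s:ℝ) - δ t))
    (hη : ∀ t, η t = (Γ t - 2 * B t) / Γ t) :
    ∀ t : ℝ, 0 ≤ t → 1/(s:ℝ) - δ t ≠ 0 → Γ t ≠ 0 →
      HasDerivAt ξ ((δ t * Γ t / (1/(s:ℝ) - δ t)) * (η t - ξ t) +
        (Γ t / 4) * (1 - (ξ t)^2) * η t) t := by
  intro t ht hD hΓ
  rw [funext hξ, hη t]
  exact ((hderivα t ht).sub_sub_two_mul_div_sub (hderivδ t ht) hD).congr_deriv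
    (advantage_deriv_eq hD hΓ)

theorem stmt_2
    (s : ℕ) (hs : 2 ≤ s)
    (α δ : ℝ → ℝ) (β γ : ℕ → ℝ → ℝ) (B Γ u R : ℝ → ℝ)
    (hB : ∀ t, B t = ∑ j ∈ Finset.Icc 1 (8*s), β j t)
    (hΓ : ∀ t, Γ t = ∑ j ∈ Finset.Icc 1 (8*s), γ j t)
    (hu : ∀ t, u t = 1 - 1/(s:ℝ) - Γ t)
    (hR : ∀ t, R t = 1 + 1/(2*(s:ℝ)) - δ t / 2 - u t)
    (hderivα : ∀ t : ℝ, 0 ≤ t → HasDerivAt α (-(α t / 2) * (Γ t - B t) + δ t * B t) t)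
    (hderivδ : ∀ t : ℝ, 0 ≤ t →
      HasDerivAt δ ((α t / 2) * (Γ t - B t) + ((1/(s:ℝ) - α t - δ t)/2) * B t - δ t * Γ t) t)
    (hderivβ1 : ∀ t : ℝ, 0 ≤ t → HasDerivAt (β 1) (-(β 1 t) * R t + (α t / 2) * Γ t) t)
    (hderivβ : ∀ j, 2 ≤ j → j ≤ 8*s → ∀ t : ℝ, 0 ≤ t →
      HasDerivAt (β j) (β (j-1) t - β j t * R t) t)
    (hderivγ1 : ∀ t : ℝ, 0 ≤ t →
      HasDerivAt (γ 1) (-(γ 1 t) * R t + (1/(2*(s:ℝ)) - δ t / 2) * Γ t) t)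
    (hderivγ : ∀ j, 2 ≤ j → j ≤ 8*s → ∀ t : ℝ, 0 ≤ t →
      HasDerivAt (γ j) (γ (j-1) t - γ j t * R t) t)
    (ξ η : ℝ → ℝ) (ηj : ℕ → ℝ → ℝ)
    (hξ : ∀ t, ξ t = (1/(s:ℝ) - δ t - 2 * α t) / (1/(s:ℝ) - δ t))
    (hηj : ∀ j, 1 ≤ j → j ≤ 8*s → ∀ t, ηj j t = (γ j t - 2 * β j t) / γ j t)
    (hη : ∀ t, η t = (Γ t - 2 * B t) / Γ t) :
    ∀ t : ℝ, 0 ≤ t → 1/(s:ℝ) - δ t ≠ 0 → Γ t ≠ 0 →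
      HasDerivAt ξ ((δ t * Γ t / (1/(s:ℝ) - δ t)) * (η t - ξ t) +
        (Γ t / 4) * (1 - (ξ t)^2) * η t) t :=
  stmt_2_general s α δ B Γ hderivα hderivδ ξ η hξ hη
end

section
/- At every time t ≥ 0 at which γ_1(t) ≠ 0 and 1/s − δ(t) ≠ 0, the advantage variable η_1 is differentiable and satisfies η_1'(t) = (Γ(t)/(2γ_1(t)))·(1/s − δ(t))·(ξ(t) − η_1(t)). -/
/-! Both `β₁` and `γ₁` decay at the common rate `R` and are fed by `Γ`, so in the quotient rule for
`β₁ / γ₁` the decay terms cancel and only the ratio of the two feeding coefficients survives. -/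

theorem hasDerivAt_advantage {b g : ℝ → ℝ} {a c r Γ t : ℝ}
    (hb : HasDerivAt b (-b t * r + a / 2 * Γ) t) (hg : HasDerivAt g (-g t * r + c / 2 * Γ) t)
    (hg0 : g t ≠ 0) (hc : c ≠ 0) :
    HasDerivAt (fun t => (g t - 2 * b t) / g t)
      (Γ / (2 * g t) * c * ((c - 2 * a) / c - (g t - 2 * b t) / g t)) t := by
  refine ((hg.sub (hb.const_mul 2)).div hg hg0).congr_deriv ?_
  simp only [Pi.sub_apply]
  field_simp
  ring

theorem stmt_4_general
    (s : ℕ) (hs : 2 ≤ s)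
    (α δ : ℝ → ℝ) (β γ : ℕ → ℝ → ℝ) (Γ R : ℝ → ℝ)
    (hderivβ1 : ∀ t : ℝ, 0 ≤ t → HasDerivAt (β 1) (-(β 1 t) * R t + (α t / 2) * Γ t) t)
    (hderivγ1 : ∀ t : ℝ, 0 ≤ t →
      HasDerivAt (γ 1) (-(γ 1 t) * R t + (1/(2*(s:ℝ)) - δ t / 2) * Γ t) t)
    (ξ : ℝ → ℝ) (ηj : ℕ → ℝ → ℝ)
    (hξ : ∀ t, ξ t = (1/(s:ℝ) - δ t - 2 * α t) / (1/(s:ℝ) - δ t))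
    (hηj : ∀ j, 1 ≤ j → j ≤ 8*s → ∀ t, ηj j t = (γ j t - 2 * β j t) / γ j t) :
    ∀ t : ℝ, 0 ≤ t → γ 1 t ≠ 0 → 1/(s:ℝ) - δ t ≠ 0 →
      HasDerivAt (ηj 1) ((Γ t / (2 * γ 1 t)) * (1/(s:ℝ) - δ t) * (ξ t - ηj 1 t)) t := by
  intro t ht hγ hc
  have hη₁ : ηj 1 = fun t => (γ 1 t - 2 * β 1 t) / γ 1 t :=
    funext (hηj 1 le_rfl (by omega))
  have hγ' : HasDerivAt (γ 1) (-γ 1 t * R t + (1 / (s:ℝ) - δ t) / 2 * Γ t) t :=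
    (hderivγ1 t ht).congr_deriv (by ring)
  rw [hξ, hη₁]
  exact hasDerivAt_advantage (hderivβ1 t ht) hγ' hγ hc

theorem stmt_4
    (s : ℕ) (hs : 2 ≤ s)
    (α δ : ℝ → ℝ) (β γ : ℕ → ℝ → ℝ) (B Γ u R : ℝ → ℝ)
    (hB : ∀ t, B t = ∑ j ∈ Finset.Icc 1 (8*s), β j t)
    (hΓ : ∀ t, Γ t = ∑ j ∈ Finset.Icc 1 (8*s), γ j t)
    (hu : ∀ t, u t = 1 - 1/(s:ℝ) - Γ t)
    (hR : ∀ t, R t = 1 + 1/(2*(s:ℝ)) - δ t / 2 - u t)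
    (hderivα : ∀ t : ℝ, 0 ≤ t → HasDerivAt α (-(α t / 2) * (Γ t - B t) + δ t * B t) t)
    (hderivδ : ∀ t : ℝ, 0 ≤ t →
      HasDerivAt δ ((α t / 2) * (Γ t - B t) + ((1/(s:ℝ) - α t - δ t)/2) * B t - δ t * Γ t) t)
    (hderivβ1 : ∀ t : ℝ, 0 ≤ t → HasDerivAt (β 1) (-(β 1 t) * R t + (α t / 2) * Γ t) t)
    (hderivβ : ∀ j, 2 ≤ j → j ≤ 8*s → ∀ t : ℝ, 0 ≤ t →
      HasDerivAt (β j) (β (j-1) t - β j t * R t) t)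
    (hderivγ1 : ∀ t : ℝ, 0 ≤ t →
      HasDerivAt (γ 1) (-(γ 1 t) * R t + (1/(2*(s:ℝ)) - δ t / 2) * Γ t) t)
    (hderivγ : ∀ j, 2 ≤ j → j ≤ 8*s → ∀ t : ℝ, 0 ≤ t →
      HasDerivAt (γ j) (γ (j-1) t - γ j t * R t) t)
    (ξ η : ℝ → ℝ) (ηj : ℕ → ℝ → ℝ)
    (hξ : ∀ t, ξ t = (1/(s:ℝ) - δ t - 2 * α t) / (1/(s:ℝ) - δ t))
    (hηj : ∀ j, 1 ≤ j → j ≤ 8*s → ∀ t, ηj j t = (γ j t - 2 * β j t) / γ j t)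
    (hη : ∀ t, η t = (Γ t - 2 * B t) / Γ t) :
    ∀ t : ℝ, 0 ≤ t → γ 1 t ≠ 0 → 1/(s:ℝ) - δ t ≠ 0 →
      HasDerivAt (ηj 1) ((Γ t / (2 * γ 1 t)) * (1/(s:ℝ) - δ t) * (ξ t - ηj 1 t)) t :=
  stmt_4_general s hs α δ β γ Γ R hderivβ1 hderivγ1 ξ ηj hξ hηj
end

section
/- Assume that for all t ≥ 0 the variables satisfy α(t) ≥ 0, δ(t) ≥ 0, β_j(t) ≥ 0 and γ_j(t) > 0 for all 1 ≤ j ≤ 8s, 1/s − δ(t) > 0, and Γ(t) > 0, and assume that Φ(0) > 0. Then the function Φ is nondecreasing on [0, ∞). -/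
/-!
`Φ` is the pointwise minimum of the differentiable advantages `ξ, η₁, …, η_{8s}`, each of the
form `(q - 2p)/q`, whose derivative has the sign of `p q' - p' q`. At a time where `Φ > 0`, an
advantage attaining the minimum is at most its predecessor in the chain `ξ ← η₁ ← ⋯ ← η_{8s}`
(`ξ` itself is at most the aggregate `η`, a mediant of the `ηⱼ`), and this comparison yields the
sign: the common rate `R` acts equally on `βⱼ` and `γⱼ` and cancels from `p q' - p' q`. Hence the
lower right Dini derivative of `Φ` is nonnegative wherever `Φ > 0`, and a fencing argument shows
that a continuous function with this property which starts positive is nondecreasing.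
-/

open Filter Set Topology

section Fencing

variable {f : ℝ → ℝ} {a b c : ℝ}

theorem sub_mul_le_image_of_frequently_lt_slope {ε : ℝ} (hf : ContinuousOn f (Icc a b))
    (hε : 0 < ε) (hc : c < f a - ε * (b - a))
    (hslope : ∀ x ∈ Ico a b, c < f x → ∀ r < 0, ∃ᶠ z in 𝓝[>] x, r < slope f x z) :
    ∀ x ∈ Icc a b, f a - ε * (x - a) ≤ f x := by
  set s := {x | f a - ε * (x - a) ≤ f x}
  have hclosed : IsClosed (s ∩ Icc a b) := by
    rw [inter_comm]
    exact ((continuousOn_const.sub (continuousOn_const.mul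
      (continuousOn_id.sub continuousOn_const))).prodMk hf).preimage_isClosed_of_isClosed
      isClosed_Icc OrderClosedTopology.isClosed_le'
  refine hclosed.Icc_subset_of_forall_exists_gt (by simp [s]) ?_
  rintro x ⟨hxs : f a - ε * (x - a) ≤ f x, hx⟩ y hy
  rcases hxs.lt_or_eq with hlt | heq
  · have hev : ∀ᶠ z in 𝓝[>] x, f a - ε * (z - a) < f z := by
      have hcont : ContinuousWithinAt (fun z => f z - (f a - ε * (z - a))) (Ioi x) x := by
        refine ((hf x (Ico_subset_Icc_self hx)).mono_of_mem_nhdsWithin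
          (Icc_mem_nhdsGT_of_mem hx)).sub (by fun_prop)
      filter_upwards [hcont.eventually_const_lt (by linarith : (0:ℝ) < _)] with z hz
      linarith
    obtain ⟨z, hz, hzy⟩ := (hev.and (Ioc_mem_nhdsGT hy)).exists
    exact ⟨z, hz.le, hzy⟩
  · have hcx : c < f x := by
      rw [← heq]; nlinarith [hx.1, hx.2]
    obtain ⟨z, hz, hzy⟩ :=
      ((hslope x hx hcx (-ε) (neg_lt_zero.2 hε)).and_eventually (Ioc_mem_nhdsGT hy)).exists
    refine ⟨z, ?_, hzy⟩
    rw [slope_def_field, lt_div_iff₀ (sub_pos.2 hzy.1)] at hz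
    show f a - ε * (z - a) ≤ f z
    linarith

theorem le_image_of_frequently_lt_slope (hf : ContinuousOn f (Icc a b)) (hc : c < f a)
    (hslope : ∀ x ∈ Ico a b, c < f x → ∀ r < 0, ∃ᶠ z in 𝓝[>] x, r < slope f x z) :
    ∀ x ∈ Icc a b, f a ≤ f x := by
  intro x hx
  have hlim : ∀ y, Tendsto (fun ε => f a - ε * (y - a)) (𝓝[>] 0) (𝓝 (f a)) := fun y => by
    have : Tendsto (fun ε => f a - ε * (y - a)) (𝓝 0) (𝓝 (f a - 0 * (y - a))) :=
      tendsto_const_nhds.sub (tendsto_id.mul_const _)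
    simpa using this.mono_left nhdsWithin_le_nhds
  refine le_of_tendsto (hlim x) ?_
  filter_upwards [(hlim b).eventually_const_lt hc, self_mem_nhdsWithin] with ε hcε hε
  exact sub_mul_le_image_of_frequently_lt_slope hf hε hcε hslope x hx

theorem monotoneOn_of_frequently_lt_slope (hf : ContinuousOn f (Ici a)) (hc : c < f a)
    (hslope : ∀ x ∈ Ici a, c < f x → ∀ r < 0, ∃ᶠ z in 𝓝[>] x, r < slope f x z) :
    MonotoneOn f (Ici a) := by
  have key : ∀ x ∈ Ici a, c < f x → ∀ y, x ≤ y → f x ≤ f y := fun x hx hcx y hxy =>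
    le_image_of_frequently_lt_slope (hf.mono (Icc_subset_Ici_self.trans (Ici_subset_Ici.2 hx)))
      hcx (fun z hz => hslope z (mem_Ici.2 (le_trans hx hz.1))) y ⟨hxy, le_rfl⟩
  intro x hx y _ hxy
  exact key x hx (hc.trans_le (key a self_mem_Ici hc x hx)) y hxy

end Fencing

section FinsetInf

variable {ι : Type*} {T : Finset ι} (hT : T.Nonempty) {f : ι → ℝ → ℝ}

theorem frequently_lt_slope_finset_inf' {f' : ι → ℝ} {x r : ℝ}
    (hf : ∀ i ∈ T, HasDerivAt (f i) (f' i) x)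
    (hr : ∀ i ∈ T, (∀ k ∈ T, f i x ≤ f k x) → r < f' i) :
    ∃ᶠ z in 𝓝[>] x, r < slope (fun t => T.inf' hT (f · t)) x z := by
  have hcont : ContinuousAt (fun t => T.inf' hT (f · t)) x :=
    ContinuousAt.finset_inf'_apply hT fun i hi => (hf i hi).continuousAt
  obtain ⟨i, hi, hfreq⟩ : ∃ i ∈ T, ∃ᶠ z in 𝓝[>] x, f i z = T.inf' hT (f · z) :=
    (Finset.frequently_exists T).1 (Frequently.of_forall fun z =>
      (T.exists_mem_eq_inf' hT (f · z)).imp fun i ⟨hi, h⟩ => ⟨hi, h.symm⟩)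
  have hix : f i x = T.inf' hT (f · x) :=
    tendsto_nhds_unique_of_frequently_eq ((hf i hi).continuousAt.mono_left nhdsWithin_le_nhds)
      (hcont.mono_left nhdsWithin_le_nhds) hfreq
  have hslope : ∀ᶠ z in 𝓝[>] x, r < slope (f i) x z :=
    ((hasDerivWithinAt_iff_tendsto_slope' (lt_irrefl x)).1 (hf i hi).hasDerivWithinAt).eventually
      (lt_mem_nhds (hr i hi fun k hk => hix ▸ T.inf'_le _ hk))
  refine (hfreq.and_eventually hslope).mono fun z ⟨hz, hrz⟩ => ?_
  rwa [slope_def_field, ← hz, ← hix, ← slope_def_field]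

theorem monotoneOn_finset_inf' {a c : ℝ}
    (hf : ∀ x ∈ Ici a, ∀ i ∈ T, ∃ f', HasDerivAt (f i) f' x ∧
      (c < f i x → (∀ k ∈ T, f i x ≤ f k x) → 0 ≤ f'))
    (hc : c < T.inf' hT (f · a)) :
    MonotoneOn (fun x => T.inf' hT (f · x)) (Ici a) := by
  choose! f' hf' hsign using hf
  refine monotoneOn_of_frequently_lt_slope (fun x hx => (ContinuousAt.finset_inf'_apply hT
    fun i hi => (hf' x hx i hi).continuousAt).continuousWithinAt) hc fun x hx hcx r hr => ?_
  exact frequently_lt_slope_finset_inf' hT (hf' x hx) fun i hi hmin =>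
    hr.trans_le (hsign x hx i hi (hcx.trans_le (T.inf'_le _ hi)) hmin)

end FinsetInf

section Advantage

noncomputable def advantage (total share : ℝ) : ℝ := (total - 2 * share) / total

theorem advantage_le_advantage_iff {q₁ q₂ p₁ p₂ : ℝ} (h₁ : 0 < q₁) (h₂ : 0 < q₂) :
    advantage q₁ p₁ ≤ advantage q₂ p₂ ↔ p₂ * q₁ ≤ p₁ * q₂ := by
  rw [advantage, advantage, div_le_div_iff₀ h₁ h₂]
  constructor <;> intro h <;> linarith

theorem advantage_pos_iff {q p : ℝ} (hq : 0 < q) : 0 < advantage q p ↔ 2 * p < q := by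
  rw [advantage, div_pos_iff_of_pos_right hq, sub_pos]

theorem le_advantage_sum {ι : Type*} {T : Finset ι} (hT : T.Nonempty) {q p : ι → ℝ} {m : ℝ}
    (hq : ∀ k ∈ T, 0 < q k) (h : ∀ k ∈ T, m ≤ advantage (q k) (p k)) :
    m ≤ advantage (∑ k ∈ T, q k) (∑ k ∈ T, p k) := by
  rw [advantage, le_div_iff₀ (Finset.sum_pos hq hT), Finset.mul_sum, Finset.mul_sum,
    ← Finset.sum_sub_distrib]
  exact Finset.sum_le_sum fun k hk => (le_div_iff₀ (hq k hk)).1 (h k hk)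

theorem HasDerivAt.advantage {q p : ℝ → ℝ} {q' p' x : ℝ} (hq : HasDerivAt q q' x)
    (hp : HasDerivAt p p' x) (hx : q x ≠ 0) :
    HasDerivAt (fun t => advantage (q t) (p t)) (2 * (p x * q' - p' * q x) / q x ^ 2) x := by
  refine ((hq.sub (hp.const_mul 2)).div hq hx).congr_deriv ?_
  simp only [Pi.sub_apply]
  ring

theorem exists_hasDerivAt_advantage_xi {α δ : ℝ → ℝ} {s b g t : ℝ}
    (hα : HasDerivAt α (-(α t / 2) * (g - b) + δ t * b) t)
    (hδ : HasDerivAt δ ((α t / 2) * (g - b) + ((1/s - α t - δ t)/2) * b - δ t * g) t)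
    (hα0 : 0 ≤ α t) (hδ0 : 0 ≤ δ t) (hv : 0 < 1/s - δ t) (hg : 0 < g) :
    ∃ ξ', HasDerivAt (fun t => advantage (1/s - δ t) (α t)) ξ' t ∧
      (0 < advantage (1/s - δ t) (α t) → advantage (1/s - δ t) (α t) ≤ advantage g b →
        0 ≤ ξ') := by
  refine ⟨_, (hδ.const_sub (1/s)).advantage hα hv.ne', fun hpos hle => ?_⟩
  rw [advantage_pos_iff hv] at hpos
  have hb : 2 * b < g := (advantage_pos_iff hg).1 (((advantage_pos_iff hv).2 hpos).trans_le hle)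
  rw [advantage_le_advantage_iff hv hg] at hle
  have key : α t * -((α t / 2) * (g - b) + ((1/s - α t - δ t)/2) * b - δ t * g)
        - (-(α t / 2) * (g - b) + δ t * b) * (1/s - δ t)
      = α t / 2 * (1/s - δ t - α t) * (g - 2 * b) + δ t * (α t * g - b * (1/s - δ t)) := by
    ring
  rw [key]
  apply div_nonneg _ (sq_nonneg _)
  have h1 : 0 ≤ α t / 2 * (1/s - δ t - α t) * (g - 2 * b) :=
    mul_nonneg (mul_nonneg (by positivity) (by linarith)) (by linarith)
  have h2 : 0 ≤ δ t * (α t * g - b * (1/s - δ t)) := mul_nonneg hδ0 (by linarith)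
  linarith

theorem exists_hasDerivAt_advantage_one {β γ : ℝ → ℝ} {s a d g r t : ℝ}
    (hβ : HasDerivAt β (-(β t) * r + (a / 2) * g) t)
    (hγ : HasDerivAt γ (-(γ t) * r + (1/(2*s) - d / 2) * g) t)
    (hγ0 : 0 < γ t) (hv : 0 < 1/s - d) (hg : 0 ≤ g) :
    ∃ η', HasDerivAt (fun t => advantage (γ t) (β t)) η' t ∧
      (advantage (γ t) (β t) ≤ advantage (1/s - d) a → 0 ≤ η') := by
  refine ⟨_, hγ.advantage hβ hγ0.ne', fun hle => ?_⟩
  rw [advantage_le_advantage_iff hγ0 hv] at hle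
  have key : β t * (-(γ t) * r + (1/(2*s) - d / 2) * g) - (-(β t) * r + (a / 2) * g) * γ t
      = g / 2 * (β t * (1/s - d) - a * γ t) := by
    ring
  rw [key]
  exact div_nonneg (mul_nonneg zero_le_two (mul_nonneg (by positivity) (by linarith)))
    (sq_nonneg _)

theorem exists_hasDerivAt_advantage_succ {β γ : ℝ → ℝ} {b₀ g₀ r t : ℝ}
    (hβ : HasDerivAt β (b₀ - β t * r) t) (hγ : HasDerivAt γ (g₀ - γ t * r) t)
    (hγ0 : 0 < γ t) (hg₀ : 0 < g₀) :
    ∃ η', HasDerivAt (fun t => advantage (γ t) (β t)) η' t ∧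
      (advantage (γ t) (β t) ≤ advantage g₀ b₀ → 0 ≤ η') := by
  refine ⟨_, hγ.advantage hβ hγ0.ne', fun hle => ?_⟩
  rw [advantage_le_advantage_iff hγ0 hg₀] at hle
  have key : β t * (g₀ - γ t * r) - (b₀ - β t * r) * γ t = β t * g₀ - b₀ * γ t := by ring
  rw [key]
  exact div_nonneg (mul_nonneg zero_le_two (by linarith)) (sq_nonneg _)

end Advantage

theorem stmt_5
    (s : ℕ) (hs : 2 ≤ s)
    (α δ : ℝ → ℝ) (β γ : ℕ → ℝ → ℝ) (B Γ R : ℝ → ℝ)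
    (hB : ∀ t, B t = ∑ j ∈ Finset.Icc 1 (8*s), β j t)
    (hΓ : ∀ t, Γ t = ∑ j ∈ Finset.Icc 1 (8*s), γ j t)
    (hderivα : ∀ t : ℝ, 0 ≤ t → HasDerivAt α (-(α t / 2) * (Γ t - B t) + δ t * B t) t)
    (hderivδ : ∀ t : ℝ, 0 ≤ t →
      HasDerivAt δ ((α t / 2) * (Γ t - B t) + ((1/(s:ℝ) - α t - δ t)/2) * B t - δ t * Γ t) t)
    (hderivβ1 : ∀ t : ℝ, 0 ≤ t → HasDerivAt (β 1) (-(β 1 t) * R t + (α t / 2) * Γ t) t)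
    (hderivβ : ∀ j, 2 ≤ j → j ≤ 8*s → ∀ t : ℝ, 0 ≤ t →
      HasDerivAt (β j) (β (j-1) t - β j t * R t) t)
    (hderivγ1 : ∀ t : ℝ, 0 ≤ t →
      HasDerivAt (γ 1) (-(γ 1 t) * R t + (1/(2*(s:ℝ)) - δ t / 2) * Γ t) t)
    (hderivγ : ∀ j, 2 ≤ j → j ≤ 8*s → ∀ t : ℝ, 0 ≤ t →
      HasDerivAt (γ j) (γ (j-1) t - γ j t * R t) t)
    (ξ : ℝ → ℝ) (ηj : ℕ → ℝ → ℝ)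
    (hξ : ∀ t, ξ t = (1/(s:ℝ) - δ t - 2 * α t) / (1/(s:ℝ) - δ t))
    (hηj : ∀ j, 1 ≤ j → j ≤ 8*s → ∀ t, ηj j t = (γ j t - 2 * β j t) / γ j t)
    (Φ : ℝ → ℝ)
    (hΦ : ∀ t, Φ t = min (ξ t)
      ((Finset.Icc 1 (8*s)).inf' (Finset.nonempty_Icc.mpr (by omega)) (fun j => ηj j t)))
    (hαpos : ∀ t : ℝ, 0 ≤ t → 0 ≤ α t)
    (hδpos : ∀ t : ℝ, 0 ≤ t → 0 ≤ δ t)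
    (hγpos : ∀ t : ℝ, 0 ≤ t → ∀ j, 1 ≤ j → j ≤ 8*s → 0 < γ j t)
    (hδlt : ∀ t : ℝ, 0 ≤ t → 0 < 1/(s:ℝ) - δ t)
    (hΓpos : ∀ t : ℝ, 0 ≤ t → 0 < Γ t)
    (hΦ0 : 0 < Φ 0) :
    MonotoneOn Φ (Set.Ici (0:ℝ)) := by
  let G : ℕ → ℝ → ℝ := fun j => if j = 0 then ξ else ηj j
  have hG0 : G 0 = fun t => advantage (1/(s:ℝ) - δ t) (α t) := (if_pos rfl).trans (funext hξ)
  have hG : ∀ j ∈ Finset.Icc 1 (8*s), G j = fun t => advantage (γ j t) (β j t) := fun j hj =>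
    (if_neg (Nat.one_le_iff_ne_zero.1 (Finset.mem_Icc.1 hj).1)).trans
      (funext (hηj j (Finset.mem_Icc.1 hj).1 (Finset.mem_Icc.1 hj).2))
  have hT : (insert 0 (Finset.Icc 1 (8*s))).Nonempty := Finset.insert_nonempty _ _
  have hΦG : Φ = fun t => (insert 0 (Finset.Icc 1 (8*s))).inf' hT (G · t) := by
    funext t
    rw [hΦ, Finset.inf'_insert (H := Finset.nonempty_Icc.mpr (by omega))]
    exact congrArg (ξ t ⊓ ·) (Finset.inf'_congr _ rfl fun j hj =>
      (congrFun (if_neg (Nat.one_le_iff_ne_zero.1 (Finset.mem_Icc.1 hj).1)) t).symm)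
  rw [hΦG] at hΦ0 ⊢
  refine monotoneOn_finset_inf' hT (fun t ht j hj => ?_) hΦ0
  rcases Finset.mem_insert.1 hj with rfl | hj
  · obtain ⟨ξ', hd, hsign⟩ := exists_hasDerivAt_advantage_xi (hderivα t ht) (hderivδ t ht)
      (hαpos t ht) (hδpos t ht) (hδlt t ht) (hΓpos t ht)
    rw [hG0]
    refine ⟨ξ', hd, fun hpos hmin => hsign hpos ?_⟩
    rw [hB, hΓ]
    exact le_advantage_sum (Finset.nonempty_Icc.mpr (by omega))
      (fun k hk => hγpos t ht k (Finset.mem_Icc.1 hk).1 (Finset.mem_Icc.1 hk).2)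
      fun k hk => by simpa only [hG k hk] using hmin k (Finset.mem_insert_of_mem hk)
  obtain ⟨hj1, hjn⟩ := Finset.mem_Icc.1 hj
  rw [hG j hj]
  rcases hj1.eq_or_lt with rfl | hj2
  · obtain ⟨η', hd, hsign⟩ := exists_hasDerivAt_advantage_one (hderivβ1 t ht) (hderivγ1 t ht)
      (hγpos t ht 1 le_rfl hjn) (hδlt t ht) (hΓpos t ht).le
    exact ⟨η', hd, fun _ hmin => hsign (by
      simpa only [hG0] using hmin 0 (Finset.mem_insert_self _ _))⟩
  · obtain ⟨η', hd, hsign⟩ := exists_hasDerivAt_advantage_succ (hderivβ j hj2 hjn t ht)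
      (hderivγ j hj2 hjn t ht) (hγpos t ht j hj1 hjn) (hγpos t ht (j-1) (by omega) (by omega))
    have hpred : j - 1 ∈ Finset.Icc 1 (8*s) := Finset.mem_Icc.2 ⟨by omega, by omega⟩
    exact ⟨η', hd, fun _ hmin => hsign (by
      simpa only [hG _ hpred] using hmin (j-1) (Finset.mem_insert_of_mem hpred))⟩
end

section
/- Let ρ ∈ (0, 1]. Assume that δ(0) = 0, and that for all t ≥ 0 the variables satisfy γ_j(t) > 0 and β_j(t) ≥ 0 for all 1 ≤ j ≤ 8s, Γ(t) > 0, 1/s − δ(t) > 0, Γ(t) − 2β(t) ≥ 0, and ξ(t) ≥ ρ. Then δ(t) < 0.2/s for all t ≥ 0. -/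
/-!
With `a = 1/s - δ`, the drift of `δ` is `αΓ/2 + (a - 2α)B/2 - δΓ`. The advantage bound `ξ ≥ ρ > 0`
gives `a - 2α ≥ 0`, and `2B ≤ Γ` then yields `δ' ≤ (5Γ/4)(1/(5s) - δ)`. Since `Γ` is continuous,
`(1/(5s) - δ) · exp (∫₀ᵗ 5Γ/4)` is nondecreasing, so `δ` cannot reach `1/(5s)` from `δ(0) = 0`.
-/

open Set

theorem lt_of_hasDerivAt_le_mul_sub {f f' K : ℝ → ℝ} {c : ℝ}
    (hf : ∀ t, 0 ≤ t → HasDerivAt f (f' t) t) (hK : ContinuousOn K (Ici 0))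
    (hbound : ∀ t, 0 ≤ t → f' t ≤ K t * (c - f t)) (h0 : f 0 < c) :
    ∀ t, 0 ≤ t → f t < c := by
  -- `K ∘ max 0` is continuous on all of `ℝ`, so it has a primitive everywhere.
  set P : ℝ → ℝ := fun x => ∫ u in (0 : ℝ)..x, K (max u 0)
  have hKext : Continuous fun u => K (max u 0) :=
    hK.comp_continuous (continuous_id.max continuous_const) fun u => le_max_right u 0
  have hP : ∀ t, 0 ≤ t → HasDerivAt P (K t) t := fun t ht => by
    simpa [max_eq_left ht] using (hKext.integral_hasStrictDerivAt 0 t).hasDerivAt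
  set g : ℝ → ℝ := fun t => (c - f t) * Real.exp (P t)
  have hg : ∀ t, 0 ≤ t →
      HasDerivAt g (-f' t * Real.exp (P t) + (c - f t) * (Real.exp (P t) * K t)) t :=
    fun t ht => ((hf t ht).const_sub c).mul (hP t ht).exp
  have hmono : MonotoneOn g (Ici 0) := by
    refine monotoneOn_of_hasDerivWithinAt_nonneg (convex_Ici 0)
      (fun t ht => (hg t ht).continuousAt.continuousWithinAt)
      (fun t ht => (hg t (interior_subset ht)).hasDerivWithinAt) fun t ht => ?_
    have ht : 0 ≤ t := interior_subset ht
    nlinarith [mul_nonneg (Real.exp_pos (P t)).le (sub_nonneg.2 (hbound t ht))]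
  intro t ht
  have hgt : g 0 ≤ g t := hmono self_mem_Ici ht ht
  have hg0 : g 0 = c - f 0 := by simp [g, P]
  by_contra! hct
  have : g t ≤ 0 := mul_nonpos_of_nonpos_of_nonneg (by linarith) (Real.exp_pos _).le
  linarith

-- The right side minus the left side is `(p - δ - 2α)(Γ - 2B)/4`.
theorem consensus_drift_le {p α δ B Γ : ℝ} (hα : 2 * α ≤ p - δ) (hB : 2 * B ≤ Γ) :
    α / 2 * (Γ - B) + (p - α - δ) / 2 * B - δ * Γ ≤ 5 * Γ / 4 * (p / 5 - δ) := by
  nlinarith [mul_nonneg (sub_nonneg.2 hα) (sub_nonneg.2 hB)]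

theorem stmt_6_general
    (s : ℕ) (hs : 2 ≤ s)
    (α δ : ℝ → ℝ) (γ : ℕ → ℝ → ℝ) (B Γ R : ℝ → ℝ)
    (hΓ : ∀ t, Γ t = ∑ j ∈ Finset.Icc 1 (8*s), γ j t)
    (hderivδ : ∀ t : ℝ, 0 ≤ t →
      HasDerivAt δ ((α t / 2) * (Γ t - B t) + ((1/(s:ℝ) - α t - δ t)/2) * B t - δ t * Γ t) t)
    (hderivγ1 : ∀ t : ℝ, 0 ≤ t →
      HasDerivAt (γ 1) (-(γ 1 t) * R t + (1/(2*(s:ℝ)) - δ t / 2) * Γ t) t)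
    (hderivγ : ∀ j, 2 ≤ j → j ≤ 8*s → ∀ t : ℝ, 0 ≤ t →
      HasDerivAt (γ j) (γ (j-1) t - γ j t * R t) t)
    (ξ : ℝ → ℝ)
    (hξ : ∀ t, ξ t = (1/(s:ℝ) - δ t - 2 * α t) / (1/(s:ℝ) - δ t))
    (ρ : ℝ) (hρ : 0 < ρ)
    (hδ0 : δ 0 = 0)
    (hδlt : ∀ t : ℝ, 0 ≤ t → 0 < 1/(s:ℝ) - δ t)
    (hΓβ : ∀ t : ℝ, 0 ≤ t → 0 ≤ Γ t - 2 * B t)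
    (hξρ : ∀ t : ℝ, 0 ≤ t → ρ ≤ ξ t) :
    ∀ t : ℝ, 0 ≤ t → δ t < 0.2 / (s:ℝ) := by
  have hs0 : (0 : ℝ) < s := Nat.cast_pos.2 (by omega)
  have hΓcont : ContinuousOn Γ (Ici 0) := by
    rw [show Γ = fun t => ∑ j ∈ Finset.Icc 1 (8*s), γ j t from funext hΓ]
    refine continuousOn_finsetSum _ fun j hj t ht => ContinuousAt.continuousWithinAt ?_
    obtain ⟨hj1, hjs⟩ := Finset.mem_Icc.1 hj
    rcases hj1.eq_or_lt with rfl | hj2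
    · exact (hderivγ1 t ht).continuousAt
    · exact (hderivγ j hj2 hjs t ht).continuousAt
  have hα : ∀ t, 0 ≤ t → 2 * α t ≤ 1/(s:ℝ) - δ t := fun t ht => by
    have := (le_div_iff₀ (hδlt t ht)).1 (hρ.le.trans ((hξρ t ht).trans_eq (hξ t)))
    linarith
  refine lt_of_hasDerivAt_le_mul_sub (K := fun t => Γ t * (5 / 4)) hderivδ
    (hΓcont.mul continuousOn_const) (fun t ht => ?_) (by rw [hδ0]; positivity)
  calc _ ≤ 5 * Γ t / 4 * (1/(s:ℝ) / 5 - δ t) :=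
        consensus_drift_le (hα t ht) (by linarith [hΓβ t ht])
    _ = Γ t * (5 / 4) * (0.2 / (s:ℝ) - δ t) := by ring

theorem stmt_6
    (s : ℕ) (hs : 2 ≤ s)
    (α δ : ℝ → ℝ) (β γ : ℕ → ℝ → ℝ) (B Γ u R : ℝ → ℝ)
    (hB : ∀ t, B t = ∑ j ∈ Finset.Icc 1 (8*s), β j t)
    (hΓ : ∀ t, Γ t = ∑ j ∈ Finset.Icc 1 (8*s), γ j t)
    (hu : ∀ t, u t = 1 - 1/(s:ℝ) - Γ t)
    (hR : ∀ t, R t = 1 + 1/(2*(s:ℝ)) - δ t / 2 - u t)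
    (hderivα : ∀ t : ℝ, 0 ≤ t → HasDerivAt α (-(α t / 2) * (Γ t - B t) + δ t * B t) t)
    (hderivδ : ∀ t : ℝ, 0 ≤ t →
      HasDerivAt δ ((α t / 2) * (Γ t - B t) + ((1/(s:ℝ) - α t - δ t)/2) * B t - δ t * Γ t) t)
    (hderivβ1 : ∀ t : ℝ, 0 ≤ t → HasDerivAt (β 1) (-(β 1 t) * R t + (α t / 2) * Γ t) t)
    (hderivβ : ∀ j, 2 ≤ j → j ≤ 8*s → ∀ t : ℝ, 0 ≤ t →
      HasDerivAt (β j) (β (j-1) t - β j t * R t) t)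
    (hderivγ1 : ∀ t : ℝ, 0 ≤ t →
      HasDerivAt (γ 1) (-(γ 1 t) * R t + (1/(2*(s:ℝ)) - δ t / 2) * Γ t) t)
    (hderivγ : ∀ j, 2 ≤ j → j ≤ 8*s → ∀ t : ℝ, 0 ≤ t →
      HasDerivAt (γ j) (γ (j-1) t - γ j t * R t) t)
    (ξ η : ℝ → ℝ) (ηj : ℕ → ℝ → ℝ)
    (hξ : ∀ t, ξ t = (1/(s:ℝ) - δ t - 2 * α t) / (1/(s:ℝ) - δ t))
    (hηj : ∀ j, 1 ≤ j → j ≤ 8*s → ∀ t, ηj j t = (γ j t - 2 * β j t) / γ j t)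
    (hη : ∀ t, η t = (Γ t - 2 * B t) / Γ t)
    (ρ : ℝ) (hρ : 0 < ρ) (hρ1 : ρ ≤ 1)
    (hδ0 : δ 0 = 0)
    (hγpos : ∀ t : ℝ, 0 ≤ t → ∀ j, 1 ≤ j → j ≤ 8*s → 0 < γ j t)
    (hβpos : ∀ t : ℝ, 0 ≤ t → ∀ j, 1 ≤ j → j ≤ 8*s → 0 ≤ β j t)
    (hΓpos : ∀ t : ℝ, 0 ≤ t → 0 < Γ t)
    (hδlt : ∀ t : ℝ, 0 ≤ t → 0 < 1/(s:ℝ) - δ t)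
    (hΓβ : ∀ t : ℝ, 0 ≤ t → 0 ≤ Γ t - 2 * B t)
    (hξρ : ∀ t : ℝ, 0 ≤ t → ρ ≤ ξ t) :
    ∀ t : ℝ, 0 ≤ t → δ t < 0.2 / (s:ℝ) :=
  stmt_6_general s hs α δ γ B Γ R hΓ hderivδ hderivγ1 hderivγ ξ hξ ρ hρ hδ0 hδlt hΓβ hξρ
end

section
/- Let s ≥ 32 and ε ∈ (0, 1/2), and let t₀ ≥ 0. Assume that for all t ≥ t₀ the variables satisfy 0 ≤ δ(t) < 0.2/s and γ_j(t) > 0 for all 1 ≤ j ≤ 8s. If at time t₀ the inequalities γ_j(t₀) < ((1−ε)/s)·e^{−j/(4s)} hold for all 1 ≤ j ≤ 8s and u(t₀) < ((1−ε)/(s·e²))·(1 + 3/s), then these inequalities hold at all times t ≥ t₀: γ_j(t) < ((1−ε)/s)·e^{−j/(4s)} for all 1 ≤ j ≤ 8s and u(t) < ((1−ε)/(s·e²))·(1 + 3/s). -/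
/-!
A first-contact (barrier) argument. Write `G j = (1-ε)/s · e^{-j/(4s)}` and `U` for the bound on
`u`. If some inequality failed, there would be a first time `T` at which all of `γ_j ≤ G j`,
`u ≤ U` hold and one of them is an equality; the touching component must then have a
nonnegative left derivative, but the equations force it to be negative:
* `γ_1`: summing the geometric bounds gives `Γ ≤ 4(1-ε)`, so the source term
  `(1/(2s) - δ/2) Γ` is beaten by the damping `G 1 · R` with `R ≥ Γ + 1.4/s`;
* `γ_j`, `j ≥ 2`: `γ_{j-1} ≤ G (j-1) = G j · e^{1/(4s)} < G j · R`, because `u ≤ U` keeps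
  `R = 1 + 1/(2s) - δ/2 - u` above `e^{1/(4s)}`;
* `u`: the chain telescopes to `Γ' = uΓ - γ_{8s}`, so `u' = γ_{8s} - u(1 - 1/s - u)`, and
  `G (8s) = U/(1 + 3/s) < U (1 - 1/s - U)`.
-/

open Set Real

theorem HasDerivWithinAt.nonneg_of_le_left {f : ℝ → ℝ} {d a b : ℝ} (hab : a < b)
    (hf : HasDerivWithinAt f d (Iic b) b) (hle : ∀ t ∈ Ioo a b, f t ≤ f b) : 0 ≤ d := by
  have := right_nhdsWithin_Ioo_neBot hab
  have hslope := (hasDerivWithinAt_iff_tendsto_slope' right_notMem_Ioo).mp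
    (hf.mono (Ioo_subset_Ioc_self.trans Ioc_subset_Iic_self : Ioo a b ⊆ Iic b))
  refine ge_of_tendsto hslope (eventually_nhdsWithin_of_forall fun t ht => ?_)
  rw [slope_def_field]
  exact div_nonneg_of_nonpos (sub_nonpos.mpr (hle t ht)) (sub_nonpos.mpr ht.2.le)

theorem forall_lt_of_contact {ι : Type*} (S : Finset ι) {f : ι → ℝ → ℝ} {c : ι → ℝ} {t₀ : ℝ}
    (hcont : ∀ i ∈ S, ContinuousOn (f i) (Ici t₀))
    (h₀ : ∀ i ∈ S, f i t₀ < c i)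
    (hcontact : ∀ T, t₀ < T → (∀ i ∈ S, f i T ≤ c i) → ∀ i ∈ S, f i T = c i →
      ∃ d < 0, HasDerivWithinAt (f i) d (Iic T) T) :
    ∀ t, t₀ ≤ t → ∀ i ∈ S, f i t < c i := by
  intro t₁ ht₁
  by_contra! hbad
  obtain ⟨i₁, hi₁, hbad₁⟩ := hbad
  set K := ⋃ i ∈ S, Icc t₀ t₁ ∩ f i ⁻¹' Ici (c i)
  have hK : IsCompact K := isCompact_Icc.of_isClosed_subset
    (isClosed_biUnion_finset fun i hi => ((hcont i hi).mono Icc_subset_Ici_self)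
      |>.preimage_isClosed_of_isClosed isClosed_Icc isClosed_Ici)
    (iUnion₂_subset fun i _ => inter_subset_left)
  have ht₁K : t₁ ∈ K := mem_biUnion hi₁ ⟨⟨ht₁, le_rfl⟩, hbad₁⟩
  obtain ⟨i, hi, ⟨hT₀, -⟩, hiT⟩ := mem_iUnion₂.mp (hK.sInf_mem ⟨t₁, ht₁K⟩)
  set T := sInf K
  have hbefore : ∀ t ∈ Ico t₀ T, ∀ j ∈ S, f j t < c j := by
    intro t ht j hj
    by_contra! h
    have hTt₁ : T ≤ t₁ := csInf_le hK.bddBelow ht₁K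
    exact ht.2.not_ge (csInf_le hK.bddBelow (mem_biUnion hj ⟨⟨ht.1, by linarith [ht.2]⟩, h⟩))
  have hT : t₀ < T := hT₀.lt_of_ne fun h => (h₀ i hi).not_ge (h ▸ hiT)
  have hle : ∀ j ∈ S, f j T ≤ c j := fun j hj =>
    le_on_closure (fun t ht => (hbefore t ht j hj).le)
      (by rw [closure_Ico hT.ne]; exact (hcont j hj).mono Icc_subset_Ici_self)
      continuousOn_const (by rw [closure_Ico hT.ne]; exact right_mem_Icc.mpr hT.le)
  have hiT' : f i T = c i := (hle i hi).antisymm hiT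
  obtain ⟨d, hd, hderiv⟩ := hcontact T hT hle i hi hiT'
  exact hd.not_ge <| hderiv.nonneg_of_le_left hT fun t ht =>
    hiT' ▸ (hbefore t (Ioo_subset_Ico_self ht) i hi).le

theorem hasDerivAt_sum_Icc_of_chain {γ : ℕ → ℝ → ℝ} {n : ℕ} (hn : 1 ≤ n) {t r a : ℝ}
    (h₁ : HasDerivAt (γ 1) (-(γ 1 t) * r + a) t)
    (h : ∀ j, 2 ≤ j → j ≤ n → HasDerivAt (γ j) (γ (j - 1) t - γ j t * r) t) :
    HasDerivAt (fun τ => ∑ j ∈ Finset.Icc 1 n, γ j τ)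
      (a + (1 - r) * ∑ j ∈ Finset.Icc 1 n, γ j t - γ n t) t := by
  induction n, hn using Nat.le_induction with
  | base => simpa using h₁.congr_deriv (by ring)
  | succ n hn ih =>
    simp only [Finset.sum_Icc_succ_top (Nat.le_succ_of_le hn)]
    have hlast := h (n + 1) (by omega) le_rfl
    rw [Nat.add_sub_cancel] at hlast
    exact ((ih fun j hj hjn => h j hj (by omega)).add hlast).congr_deriv (by ring)

theorem sum_Icc_exp_neg_mul_le {x : ℝ} (hx : 0 < x) (n : ℕ) :
    ∑ j ∈ Finset.Icc 1 n, exp (-(j * x)) ≤ 1 / x := by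
  set r := exp (-x)
  have hr : r < 1 := exp_lt_one_iff.mpr (neg_lt_zero.mpr hx)
  have hrx : r * exp x = 1 := by rw [← exp_add, neg_add_cancel, exp_zero]
  calc ∑ j ∈ Finset.Icc 1 n, exp (-(j * x)) = ∑ j ∈ Finset.Ico 1 (n + 1), r ^ j := by
        refine Finset.sum_congr (by ext; simp) fun j _ => ?_
        rw [← exp_nat_mul, mul_neg]
    _ ≤ r ^ 1 / (1 - r) := geom_sum_Ico_le_of_lt_one (exp_pos _).le hr
    _ ≤ 1 / x := by
        rw [pow_one, div_le_div_iff₀ (by linarith) hx]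
        nlinarith [add_one_le_exp x, exp_pos (-x)]

theorem exp_le_one_add_add_sq {x : ℝ} (h₀ : 0 ≤ x) (h₁ : x ≤ 1) :
    exp x ≤ 1 + x + 3 / 4 * x ^ 2 := by
  have := exp_bound' h₀ h₁ (n := 2) two_pos
  norm_num [Finset.sum_range_succ, Nat.factorial] at this
  linarith

theorem exp_two_gt : 7.38 < exp 2 := by
  have h : exp 2 = exp 1 ^ 2 := by rw [← exp_nat_mul]; norm_num
  rw [h]
  nlinarith [exp_one_gt_d9]

noncomputable def gammaBarrier (s : ℕ) (ε : ℝ) (j : ℕ) : ℝ :=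
  ((1-ε)/(s:ℝ)) * Real.exp (-(j:ℝ)/(4*(s:ℝ)))

noncomputable def uBarrier (s : ℕ) (ε : ℝ) : ℝ :=
  ((1-ε)/((s:ℝ) * Real.exp 2)) * (1 + 3/(s:ℝ))

section Barriers

variable {s : ℕ} {ε : ℝ}

theorem gammaBarrier_pos (hs : 0 < s) (hε : ε < 1) (j : ℕ) : 0 < gammaBarrier s ε j := by
  unfold gammaBarrier
  have : (0:ℝ) < 1 - ε := by linarith
  positivity

theorem gammaBarrier_eq_mul_exp (j : ℕ) :
    gammaBarrier s ε j = gammaBarrier s ε (j + 1) * exp (1 / (4 * s)) := by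
  rw [gammaBarrier, gammaBarrier, mul_assoc, ← exp_add]
  congr 2
  push_cast
  ring

theorem sum_gammaBarrier_le (hs : 0 < s) (hε : ε < 1) (n : ℕ) :
    ∑ j ∈ Finset.Icc 1 n, gammaBarrier s ε j ≤ 4 * (1 - ε) := by
  have hs' : (0:ℝ) < s := by exact_mod_cast hs
  have hsum := sum_Icc_exp_neg_mul_le (x := 1 / (4 * s)) (by positivity) n
  calc ∑ j ∈ Finset.Icc 1 n, gammaBarrier s ε j
      = (1 - ε) / s * ∑ j ∈ Finset.Icc 1 n, exp (-(j * (1 / (4 * s)))) := by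
        rw [Finset.mul_sum]
        refine Finset.sum_congr rfl fun j _ => ?_
        rw [gammaBarrier, neg_div, mul_one_div]
    _ ≤ (1 - ε) / s * (1 / (1 / (4 * s))) :=
        mul_le_mul_of_nonneg_left hsum (div_nonneg (by linarith) hs'.le)
    _ = 4 * (1 - ε) := by field_simp

-- `(1 + 3/32) / 7.38 < 0.1483`; `exp_inv_four_mul_lt` has only about `0.0017/s` to spare.
theorem uBarrier_lt (hs : 32 ≤ s) (hε₀ : 0 ≤ ε) : uBarrier s ε < 0.1483 / s := by
  have hs' : (32:ℝ) ≤ s := by exact_mod_cast hs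
  have he := exp_two_gt
  rw [uBarrier, div_mul_eq_mul_div, div_lt_div_iff₀ (by positivity) (by positivity)]
  have h3 : 3 / (s:ℝ) ≤ 3 / 32 := div_le_div_of_nonneg_left (by norm_num) (by norm_num) hs'
  nlinarith [mul_le_mul_of_nonneg_left h3 (by positivity : (0:ℝ) ≤ s),
    mul_nonneg hε₀ (by positivity : (0:ℝ) ≤ (1 + 3 / s) * s),
    mul_lt_mul_of_pos_left he (by positivity : (0:ℝ) < s)]

theorem exp_inv_four_mul_lt {u δ : ℝ} (hs : 32 ≤ s) (hε₀ : 0 ≤ ε) (hu : u ≤ uBarrier s ε)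
    (hδ : δ < 0.2 / s) : exp (1 / (4 * s)) < 1 + 1 / (2 * s) - δ / 2 - u := by
  have hs' : (32:ℝ) ≤ s := by exact_mod_cast hs
  have hexp := exp_le_one_add_add_sq (x := 1 / (4 * s)) (by positivity)
    (by rw [div_le_one (by positivity)]; linarith)
  have hsmall :
      1 / (4 * (s:ℝ)) + 3 / 4 * (1 / (4 * s)) ^ 2 + 0.1483 / s ≤ 1 / (2 * s) - 0.1 / s := by
    rw [← sub_nonneg]
    field_simp
    nlinarith
  linarith [uBarrier_lt hs hε₀, show (0.2:ℝ) / s = 2 * (0.1 / s) by ring]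

theorem gammaBarrier_lt_gammaBarrier_succ_mul (hs : 0 < s) (hε : ε < 1) {R : ℝ} (j : ℕ)
    (hR : exp (1 / (4 * s)) < R) : gammaBarrier s ε j < gammaBarrier s ε (j + 1) * R :=
  gammaBarrier_eq_mul_exp j ▸ mul_lt_mul_of_pos_left hR (gammaBarrier_pos hs hε _)

theorem gammaBarrier_lt_uBarrier_mul (hs : 32 ≤ s) (hε₀ : 0 ≤ ε) (hε : ε < 1) :
    gammaBarrier s ε (8 * s) < uBarrier s ε * (1 - 1 / s - uBarrier s ε) := by
  have hs' : (32:ℝ) ≤ s := by exact_mod_cast hs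
  have hU : uBarrier s ε = gammaBarrier s ε (8 * s) * (1 + 3 / s) := by
    have htwo : -((8 * s : ℕ) : ℝ) / (4 * s) = -2 := by
      push_cast
      field_simp
      norm_num
    rw [uBarrier, gammaBarrier, htwo, exp_neg]
    ring
  have hgrowth : 1 < (1 + 3 / s) * (1 - 1 / s - uBarrier s ε) := by
    have hx : 1 / (s:ℝ) ≤ 1 / 32 := one_div_le_one_div_of_le (by norm_num) hs'
    have hx₀ : 0 < 1 / (s:ℝ) := by positivity
    have hUx : uBarrier s ε < 0.1483 * (1 / s) := by
      simpa only [← div_eq_mul_one_div] using uBarrier_lt hs hε₀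
    rw [show 3 / (s:ℝ) = 3 * (1 / s) by ring]
    nlinarith [mul_lt_mul_of_pos_left hUx (by positivity : (0:ℝ) < 1 + 3 * (1 / s))]
  rw [hU, mul_assoc]
  exact lt_mul_of_one_lt_right (gammaBarrier_pos (by omega) hε _) (hU ▸ hgrowth)

theorem mul_lt_gammaBarrier_one_mul (hs : 32 ≤ s) (hε₀ : 0 ≤ ε) (hε : ε < 1 / 2)
    {Γ δ R : ℝ} (hΓ₀ : 0 ≤ Γ) (hΓ : Γ ≤ 4 * (1 - ε)) (hδ₀ : 0 ≤ δ) (hδ : δ < 0.2 / s)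
    (hR : R = Γ + 3 / (2 * s) - δ / 2) :
    (1 / (2 * s) - δ / 2) * Γ < gammaBarrier s ε 1 * R := by
  have hs' : (32:ℝ) ≤ s := by exact_mod_cast hs
  set x := 1 / (s:ℝ)
  have hx : x ≤ 1 / 32 := one_div_le_one_div_of_le (by norm_num) hs'
  have hx₀ : 0 < x := by positivity
  have hG : (1 - ε) * x * (1 - x / 4) ≤ gammaBarrier s ε 1 := by
    have hexp := add_one_le_exp (-(x / 4))
    rw [gammaBarrier, Nat.cast_one, show -1 / (4 * (s:ℝ)) = -(x / 4) by ring,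
      show (1 - ε) / s = (1 - ε) * x by ring]
    exact mul_le_mul_of_nonneg_left (by linarith) (mul_nonneg (by linarith) hx₀.le)
  have hR' : Γ + 1.4 * x ≤ R := by
    rw [hR]
    linarith [show 3 / (2 * (s:ℝ)) = 1.5 * x by ring, show 0.2 / (s:ℝ) = 0.2 * x by ring]
  calc (1 / (2 * s) - δ / 2) * Γ ≤ x / 2 * Γ := by
        gcongr
        linarith [show 1 / (2 * (s:ℝ)) = x / 2 by ring]
    _ < (1 - ε) * x * (1 - x / 4) * (Γ + 1.4 * x) := by
        have hmargin : 0 < (1 - ε) * x * (1.4 - 0.35 * x - Γ / 4) :=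
          mul_pos (mul_pos (by linarith) hx₀) (by linarith)
        nlinarith [mul_nonneg (mul_nonneg hx₀.le (by linarith : (0:ℝ) ≤ 1 - ε - 1 / 2)) hΓ₀,
          mul_pos hx₀ hmargin]
    _ ≤ gammaBarrier s ε 1 * R :=
        mul_le_mul hG hR' (by positivity) (gammaBarrier_pos (by omega) (by linarith) 1).le

end Barriers

theorem hasDerivAt_u_of_chain {s n : ℕ} (hn : 1 ≤ n) {δ : ℝ} {γ : ℕ → ℝ → ℝ}
    {Γ u : ℝ → ℝ} {R t : ℝ} (hΓ : ∀ t, Γ t = ∑ j ∈ Finset.Icc 1 n, γ j t)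
    (hu : ∀ t, u t = 1 - 1 / (s:ℝ) - Γ t) (hR : R = 1 + 1 / (2 * (s:ℝ)) - δ / 2 - u t)
    (hγ₁ : HasDerivAt (γ 1) (-(γ 1 t) * R + (1 / (2 * (s:ℝ)) - δ / 2) * Γ t) t)
    (hγ : ∀ j, 2 ≤ j → j ≤ n → HasDerivAt (γ j) (γ (j - 1) t - γ j t * R) t) :
    HasDerivAt u (γ n t - u t * Γ t) t := by
  have hΓ' := hasDerivAt_sum_Icc_of_chain hn hγ₁ hγ
  simp only [← hΓ] at hΓ'
  have hu' := hΓ'.const_sub (1 - 1 / (s:ℝ))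
  simp only [← hu] at hu'
  exact hu'.congr_deriv (by rw [hR, hu]; ring)

section ContactTime

variable {s : ℕ} {ε : ℝ} {T : ℝ}

theorem exists_deriv_neg_of_u_contact {u : ℝ → ℝ} {γₙ Γ : ℝ} (hs : 32 ≤ s) (hε₀ : 0 ≤ ε)
    (hε : ε < 1) (hu' : HasDerivAt u (γₙ - u T * Γ) T) (hu : u T = 1 - 1 / (s:ℝ) - Γ)
    (hγₙ : γₙ ≤ gammaBarrier s ε (8 * s)) (heq : u T = uBarrier s ε) :
    ∃ d < 0, HasDerivWithinAt u d (Iic T) T := by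
  refine ⟨_, ?_, hu'.hasDerivWithinAt⟩
  rw [show Γ = 1 - 1 / s - u T by linarith, heq]
  linarith [gammaBarrier_lt_uBarrier_mul hs hε₀ hε]

theorem exists_deriv_neg_of_gamma_contact {γ : ℕ → ℝ → ℝ} {Γ δ u R : ℝ}
    (hs : 32 ≤ s) (hε₀ : 0 ≤ ε) (hε : ε < 1 / 2)
    (hγ₁ : HasDerivAt (γ 1) (-(γ 1 T) * R + (1 / (2 * (s:ℝ)) - δ / 2) * Γ) T)
    (hγ : ∀ j, 2 ≤ j → j ≤ 8 * s → HasDerivAt (γ j) (γ (j - 1) T - γ j T * R) T)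
    (hΓ : Γ = ∑ j ∈ Finset.Icc 1 (8 * s), γ j T) (hu : u = 1 - 1 / (s:ℝ) - Γ)
    (hR : R = 1 + 1 / (2 * (s:ℝ)) - δ / 2 - u) (hδ₀ : 0 ≤ δ) (hδ : δ < 0.2 / s)
    (hpos : ∀ j ∈ Finset.Icc 1 (8 * s), 0 ≤ γ j T) (huU : u ≤ uBarrier s ε)
    (hle : ∀ j ∈ Finset.Icc 1 (8 * s), γ j T ≤ gammaBarrier s ε j)
    {j : ℕ} (hj : j ∈ Finset.Icc 1 (8 * s)) (heq : γ j T = gammaBarrier s ε j) :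
    ∃ d < 0, HasDerivWithinAt (γ j) d (Iic T) T := by
  obtain ⟨hj₁, hjn⟩ := Finset.mem_Icc.mp hj
  obtain rfl | hj₂ := hj₁.eq_or_lt
  · refine ⟨_, ?_, hγ₁.hasDerivWithinAt⟩
    have hΓ₀ : 0 ≤ Γ := hΓ ▸ Finset.sum_nonneg hpos
    have hΓle : Γ ≤ 4 * (1 - ε) := hΓ ▸
      (Finset.sum_le_sum hle).trans (sum_gammaBarrier_le (by omega) (by linarith) _)
    have := mul_lt_gammaBarrier_one_mul hs hε₀ hε hΓ₀ hΓle hδ₀ hδ (R := R)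
      (by rw [hR, hu]; ring)
    rw [heq]
    linarith
  · refine ⟨_, ?_, (hγ j hj₂ hjn).hasDerivWithinAt⟩
    obtain ⟨k, rfl⟩ : ∃ k, j = k + 1 := ⟨j - 1, by omega⟩
    have hRexp : exp (1 / (4 * s)) < R := hR ▸ exp_inv_four_mul_lt hs hε₀ huU hδ
    have := gammaBarrier_lt_gammaBarrier_succ_mul (ε := ε) (by omega) (by linarith) k hRexp
    rw [Nat.add_sub_cancel, heq]
    linarith [hle k (Finset.mem_Icc.mpr ⟨by omega, by omega⟩)]

end ContactTime

theorem stmt_8_general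
    (s : ℕ) (hs : 32 ≤ s)
    (δ : ℝ → ℝ) (γ : ℕ → ℝ → ℝ) (Γ u R : ℝ → ℝ)
    (hΓ : ∀ t, Γ t = ∑ j ∈ Finset.Icc 1 (8*s), γ j t)
    (hu : ∀ t, u t = 1 - 1/(s:ℝ) - Γ t)
    (hR : ∀ t, R t = 1 + 1/(2*(s:ℝ)) - δ t / 2 - u t)
    (hderivγ1 : ∀ t : ℝ, 0 ≤ t →
      HasDerivAt (γ 1) (-(γ 1 t) * R t + (1/(2*(s:ℝ)) - δ t / 2) * Γ t) t)
    (hderivγ : ∀ j, 2 ≤ j → j ≤ 8*s → ∀ t : ℝ, 0 ≤ t →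
      HasDerivAt (γ j) (γ (j-1) t - γ j t * R t) t)
    (ε : ℝ) (hε : 0 < ε) (hε' : ε < 1/2) (t₀ : ℝ) (ht₀ : 0 ≤ t₀)
    (hδb : ∀ t : ℝ, t₀ ≤ t → 0 ≤ δ t ∧ δ t < 0.2 / (s:ℝ))
    (hγpos : ∀ t : ℝ, t₀ ≤ t → ∀ j, 1 ≤ j → j ≤ 8*s → 0 < γ j t)
    (hinit1 : ∀ j, 1 ≤ j → j ≤ 8*s →
      γ j t₀ < ((1-ε)/(s:ℝ)) * Real.exp (-(j:ℝ)/(4*(s:ℝ))))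
    (hinit2 : u t₀ < ((1-ε)/((s:ℝ) * Real.exp 2)) * (1 + 3/(s:ℝ))) :
    ∀ t : ℝ, t₀ ≤ t →
      (∀ j, 1 ≤ j → j ≤ 8*s →
        γ j t < ((1-ε)/(s:ℝ)) * Real.exp (-(j:ℝ)/(4*(s:ℝ)))) ∧
      u t < ((1-ε)/((s:ℝ) * Real.exp 2)) * (1 + 3/(s:ℝ)) := by
  have hu' : ∀ t, 0 ≤ t → HasDerivAt u (γ (8 * s) t - u t * Γ t) t := fun t ht =>
    hasDerivAt_u_of_chain (by omega) hΓ hu (hR t) (hderivγ1 t ht)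
      fun j h₁ h₂ => hderivγ j h₁ h₂ t ht
  -- index `none` stands for `u`, `some j` for `γ j`
  have key := forall_lt_of_contact (Finset.insertNone (Finset.Icc 1 (8 * s)))
    (f := fun i => i.elim u γ) (c := fun i => i.elim (uBarrier s ε) (gammaBarrier s ε)) (t₀ := t₀)
    ?cont ?init ?contact
  · intro t ht
    obtain ⟨hut, hγt⟩ := Finset.forall_mem_insertNone.mp (key t ht)
    exact ⟨fun j h₁ h₂ => hγt j (Finset.mem_Icc.mpr ⟨h₁, h₂⟩), hut⟩
  case cont =>
    refine Finset.forall_mem_insertNone.mpr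
      ⟨fun t ht => (hu' t (ht₀.trans ht)).continuousAt.continuousWithinAt, ?_⟩
    rintro (_ | _ | j) hj t ht
    · simp at hj
    · exact (hderivγ1 t (ht₀.trans ht)).continuousAt.continuousWithinAt
    · exact (hderivγ (j + 2) (by omega) (Finset.mem_Icc.mp hj).2 t
        (ht₀.trans ht)).continuousAt.continuousWithinAt
  case init =>
    exact Finset.forall_mem_insertNone.mpr
      ⟨hinit2, fun j hj => hinit1 j (Finset.mem_Icc.mp hj).1 (Finset.mem_Icc.mp hj).2⟩
  case contact =>
    intro T hT hle i hi heq
    have hT₀ : 0 ≤ T := ht₀.trans hT.le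
    obtain ⟨hδ₀, hδ⟩ := hδb T hT.le
    obtain ⟨huT, hγT⟩ := Finset.forall_mem_insertNone.mp hle
    cases i with
    | none =>
      exact exists_deriv_neg_of_u_contact hs hε.le (by linarith) (hu' T hT₀) (hu T)
        (hγT _ (Finset.right_mem_Icc.mpr (by omega))) heq
    | some j =>
      exact exists_deriv_neg_of_gamma_contact hs hε.le hε' (hderivγ1 T hT₀)
        (fun j h₁ h₂ => hderivγ j h₁ h₂ T hT₀) (hΓ T) (hu T) (hR T) hδ₀ hδ
        (fun j hj => (hγpos T hT.le j (Finset.mem_Icc.mp hj).1 (Finset.mem_Icc.mp hj).2).le)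
        huT hγT (Finset.some_mem_insertNone.mp hi) heq

theorem stmt_8
    (s : ℕ) (hs : 32 ≤ s)
    (α δ : ℝ → ℝ) (β γ : ℕ → ℝ → ℝ) (B Γ u R : ℝ → ℝ)
    (hB : ∀ t, B t = ∑ j ∈ Finset.Icc 1 (8*s), β j t)
    (hΓ : ∀ t, Γ t = ∑ j ∈ Finset.Icc 1 (8*s), γ j t)
    (hu : ∀ t, u t = 1 - 1/(s:ℝ) - Γ t)
    (hR : ∀ t, R t = 1 + 1/(2*(s:ℝ)) - δ t / 2 - u t)
    (hderivα : ∀ t : ℝ, 0 ≤ t → HasDerivAt α (-(α t / 2) * (Γ t - B t) + δ t * B t) t)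
    (hderivδ : ∀ t : ℝ, 0 ≤ t →
      HasDerivAt δ ((α t / 2) * (Γ t - B t) + ((1/(s:ℝ) - α t - δ t)/2) * B t - δ t * Γ t) t)
    (hderivβ1 : ∀ t : ℝ, 0 ≤ t → HasDerivAt (β 1) (-(β 1 t) * R t + (α t / 2) * Γ t) t)
    (hderivβ : ∀ j, 2 ≤ j → j ≤ 8*s → ∀ t : ℝ, 0 ≤ t →
      HasDerivAt (β j) (β (j-1) t - β j t * R t) t)
    (hderivγ1 : ∀ t : ℝ, 0 ≤ t →
      HasDerivAt (γ 1) (-(γ 1 t) * R t + (1/(2*(s:ℝ)) - δ t / 2) * Γ t) t)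
    (hderivγ : ∀ j, 2 ≤ j → j ≤ 8*s → ∀ t : ℝ, 0 ≤ t →
      HasDerivAt (γ j) (γ (j-1) t - γ j t * R t) t)
    (ε : ℝ) (hε : 0 < ε) (hε' : ε < 1/2) (t₀ : ℝ) (ht₀ : 0 ≤ t₀)
    (hδb : ∀ t : ℝ, t₀ ≤ t → 0 ≤ δ t ∧ δ t < 0.2 / (s:ℝ))
    (hγpos : ∀ t : ℝ, t₀ ≤ t → ∀ j, 1 ≤ j → j ≤ 8*s → 0 < γ j t)
    (hinit1 : ∀ j, 1 ≤ j → j ≤ 8*s →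
      γ j t₀ < ((1-ε)/(s:ℝ)) * Real.exp (-(j:ℝ)/(4*(s:ℝ))))
    (hinit2 : u t₀ < ((1-ε)/((s:ℝ) * Real.exp 2)) * (1 + 3/(s:ℝ))) :
    ∀ t : ℝ, t₀ ≤ t →
      (∀ j, 1 ≤ j → j ≤ 8*s →
        γ j t < ((1-ε)/(s:ℝ)) * Real.exp (-(j:ℝ)/(4*(s:ℝ)))) ∧
      u t < ((1-ε)/((s:ℝ) * Real.exp 2)) * (1 + 3/(s:ℝ)) :=
  stmt_8_general s hs δ γ Γ u R hΓ hu hR hderivγ1 hderivγ ε hε hε' t₀ ht₀ hδb hγpos hinit1 hinit2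
end

section
/- Let s ≥ 32. Assume that for all t ≥ 0 the variables satisfy γ_j(t) > 0 for all 1 ≤ j ≤ 8s, 0 ≤ δ(t) ≤ 0.2/s, Γ(t) ≥ 1 − 2/s, and γ_2(t) ≤ 1/s, and assume that γ_{j−1}(0)/γ_j(0) > 1/2 for all 2 ≤ j ≤ 8s. Then for every 2 ≤ j ≤ 8s and every t ≥ 0 it holds that γ_{j−1}(t)/γ_j(t) > 1/2. -/
/-!
With `g_j = γ_{j-1} - γ_j / 2` the claim is `g_j > 0`. The chain equations give
`g_j' = g_{j-1} - R g_j` for `j ≥ 3` and `g_2' = (1/(2s) - δ/2) Γ - γ_1 / 2 - R g_2`.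
At the first time `T > 0` at which some `g_j` vanishes, the smallest such `j` has
`g_j'(T) ≤ 0`. For `j ≥ 3` this contradicts `g_j'(T) = g_{j-1}(T) > 0`; for `j = 2`,
`γ_1 = γ_2 / 2` gives `g_2'(T) = (1/(2s) - δ/2) Γ - γ_2 / 4 ≥ (0.4/s)(1 - 2/s) - 1/(4s) > 0`.
-/

open Filter Set Topology

theorem HasDerivAt.nonpos_of_eventually_ge_nhdsLT {f : ℝ → ℝ} {d T : ℝ} (hd : HasDerivAt f d T)
    (hle : ∀ᶠ t in 𝓝[<] T, f T ≤ f t) : d ≤ 0 := by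
  refine le_of_tendsto (hasDerivAt_iff_tendsto_slope_left_right.mp hd).1 ?_
  filter_upwards [hle, self_mem_nhdsWithin] with t ht htT
  rw [slope_def_field]
  exact div_nonpos_of_nonneg_of_nonpos (sub_nonneg.mpr ht) (sub_nonpos.mpr (le_of_lt htT))

theorem exists_first_nonpos {ι : Type*} (s : Finset ι) (f : ι → ℝ → ℝ) {a : ℝ}
    (hcont : ∀ i ∈ s, ContinuousOn (f i) (Ici a)) (ha : ∀ i ∈ s, 0 < f i a)
    (hbad : ∃ t, a ≤ t ∧ ∃ i ∈ s, f i t ≤ 0) :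
    ∃ T, a < T ∧ (∀ t ∈ Ico a T, ∀ i ∈ s, 0 < f i t) ∧ (∀ i ∈ s, 0 ≤ f i T) ∧
      ∃ i ∈ s, f i T = 0 := by
  set S := ⋃ i ∈ s, Ici a ∩ f i ⁻¹' Iic 0
  have hS : ∀ t, t ∈ S ↔ a ≤ t ∧ ∃ i ∈ s, f i t ≤ 0 := by
    intro t
    simp only [S, mem_iUnion, mem_inter_iff, mem_Ici, mem_preimage, mem_Iic, exists_prop]
    tauto
  have hSne : S.Nonempty := by obtain ⟨t, ht⟩ := hbad; exact ⟨t, (hS t).2 ht⟩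
  have hSbdd : BddBelow S := ⟨a, fun t ht => ((hS t).1 ht).1⟩
  have hSclosed : IsClosed S := isClosed_biUnion_finset fun i hi =>
    (hcont i hi).preimage_isClosed_of_isClosed isClosed_Ici isClosed_Iic
  obtain ⟨haT, i, hi, hiT⟩ := (hS _).1 (hSclosed.csInf_mem hSne hSbdd)
  set T := sInf S
  have hbefore : ∀ t ∈ Ico a T, ∀ i ∈ s, 0 < f i t := by
    intro t ht i hi
    by_contra! hle
    exact (not_le.mpr ht.2) (csInf_le hSbdd ((hS t).2 ⟨ht.1, i, hi, hle⟩))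
  have hlt : a < T := haT.lt_of_ne fun h => by
    rw [← h] at hiT; exact (ha i hi).not_ge hiT
  have hnonneg : ∀ i ∈ s, 0 ≤ f i T := by
    intro i hi
    have hcontT : ContinuousWithinAt (f i) (Iio T) T :=
      ((hcont i hi) T haT).mono_of_mem_nhdsWithin
        (mem_of_superset (Ioo_mem_nhdsLT hlt) fun t ht => le_of_lt ht.1)
    refine ge_of_tendsto hcontT.tendsto ?_
    filter_upwards [Ioo_mem_nhdsLT hlt] with t ht using (hbefore t ⟨ht.1.le, ht.2⟩ i hi).le
  exact ⟨T, hlt, hbefore, hnonneg, i, hi, le_antisymm hiT (hnonneg i hi)⟩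

noncomputable def chainGap (γ : ℕ → ℝ → ℝ) (j : ℕ) (t : ℝ) : ℝ := γ (j - 1) t - γ j t / 2

theorem one_half_lt_div_iff_chainGap_pos {γ : ℕ → ℝ → ℝ} {j : ℕ} {t : ℝ} (hγ : 0 < γ j t) :
    1 / 2 < γ (j - 1) t / γ j t ↔ 0 < chainGap γ j t := by
  rw [lt_div_iff₀ hγ, chainGap]
  constructor <;> intro h <;> linarith

theorem hasDerivAt_chainGap_two {γ : ℕ → ℝ → ℝ} {R q t : ℝ}
    (h1 : HasDerivAt (γ 1) (-(γ 1 t) * R + q) t) (h2 : HasDerivAt (γ 2) (γ 1 t - γ 2 t * R) t) :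
    HasDerivAt (chainGap γ 2) (q - γ 1 t / 2 - R * chainGap γ 2 t) t := by
  refine (h1.sub (h2.div_const 2)).congr_deriv ?_
  simp only [chainGap, Nat.reduceSub]
  ring

theorem hasDerivAt_chainGap_succ {γ : ℕ → ℝ → ℝ} {j : ℕ} {R t : ℝ}
    (h : HasDerivAt (γ j) (γ (j - 1) t - γ j t * R) t)
    (hsucc : HasDerivAt (γ (j + 1)) (γ j t - γ (j + 1) t * R) t) :
    HasDerivAt (chainGap γ (j + 1)) (chainGap γ j t - R * chainGap γ (j + 1) t) t := by
  refine (h.sub (hsucc.div_const 2)).congr_deriv ?_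
  simp only [chainGap, Nat.add_sub_cancel]
  ring

theorem chainGap_ne_zero {γ : ℕ → ℝ → ℝ} {n : ℕ} {T R q : ℝ}
    (hbefore : ∀ᶠ t in 𝓝[<] T, ∀ j ∈ Finset.Icc 2 n, 0 < chainGap γ j t)
    (hT : ∀ j ∈ Finset.Icc 2 n, 0 ≤ chainGap γ j T)
    (h1 : HasDerivAt (γ 1) (-(γ 1 T) * R + q) T)
    (hγ : ∀ j ∈ Finset.Icc 2 n, HasDerivAt (γ j) (γ (j - 1) T - γ j T * R) T)
    (hq : γ 2 T / 4 < q) :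
    ∀ j ∈ Finset.Icc 2 n, chainGap γ j T ≠ 0 := by
  have hleft : ∀ j ∈ Finset.Icc 2 n, chainGap γ j T = 0 → ∀ᶠ t in 𝓝[<] T,
      chainGap γ j T ≤ chainGap γ j t := fun j hj h0 => by
    filter_upwards [hbefore] with t ht using h0 ▸ (ht j hj).le
  intro j hj
  obtain ⟨hj2, hjn⟩ := Finset.mem_Icc.mp hj
  induction j, hj2 using Nat.le_induction with
  | base =>
    intro h0
    have hd := (hasDerivAt_chainGap_two h1 (hγ 2 hj)).nonpos_of_eventually_ge_nhdsLT
      (hleft 2 hj h0)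
    rw [h0, mul_zero, sub_zero] at hd
    simp only [chainGap, Nat.reduceSub] at h0
    linarith
  | succ j hj2 ih =>
    intro h0
    have hj' : j ∈ Finset.Icc 2 n := Finset.mem_Icc.mpr ⟨hj2, by omega⟩
    have hpos : 0 < chainGap γ j T := (hT j hj').lt_of_ne' (ih hj' (by omega))
    have hd := HasDerivAt.nonpos_of_eventually_ge_nhdsLT
      (hasDerivAt_chainGap_succ (hγ j hj') (hγ (j + 1) hj)) (hleft (j + 1) hj h0)
    rw [h0, mul_zero, sub_zero] at hd
    exact hpos.not_ge hd

theorem div_four_lt_mul_of_bounds {s δ Γ g : ℝ} (hs : 6 ≤ s) (hδ : δ ≤ 0.2 / s)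
    (hΓ : 1 - 2 / s ≤ Γ) (hg : g ≤ 1 / s) : g / 4 < (1 / (2 * s) - δ / 2) * Γ := by
  have hs0 : 0 < s := by linarith
  have hc : 0.4 / s ≤ 1 / (2 * s) - δ / 2 := by
    have : 0.4 / s = 1 / (2 * s) - 0.2 / s / 2 := by field_simp; ring
    rw [this]
    linarith
  have hΓ' : 0 ≤ 1 - 2 / s := by rw [sub_nonneg, div_le_one hs0]; linarith
  calc g / 4 ≤ 1 / s / 4 := by linarith
    _ < 0.4 / s * (1 - 2 / s) := by
      rw [div_div, ← sub_pos]; field_simp; nlinarith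
    _ ≤ (1 / (2 * s) - δ / 2) * Γ :=
      mul_le_mul hc hΓ hΓ' ((by positivity : (0:ℝ) < 0.4 / s).le.trans hc)

theorem stmt_9_general
    (s : ℕ) (hs : 32 ≤ s)
    (δ : ℝ → ℝ) (γ : ℕ → ℝ → ℝ) (Γ R : ℝ → ℝ)
    (hderivγ1 : ∀ t : ℝ, 0 ≤ t →
      HasDerivAt (γ 1) (-(γ 1 t) * R t + (1/(2*(s:ℝ)) - δ t / 2) * Γ t) t)
    (hderivγ : ∀ j, 2 ≤ j → j ≤ 8*s → ∀ t : ℝ, 0 ≤ t →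
      HasDerivAt (γ j) (γ (j-1) t - γ j t * R t) t)
    (hγpos : ∀ t : ℝ, 0 ≤ t → ∀ j, 1 ≤ j → j ≤ 8*s → 0 < γ j t)
    (hδb : ∀ t : ℝ, 0 ≤ t → 0 ≤ δ t ∧ δ t ≤ 0.2 / (s:ℝ))
    (hΓb : ∀ t : ℝ, 0 ≤ t → 1 - 2/(s:ℝ) ≤ Γ t)
    (hγ2 : ∀ t : ℝ, 0 ≤ t → γ 2 t ≤ 1/(s:ℝ))
    (hinit : ∀ j, 2 ≤ j → j ≤ 8*s → 1/2 < γ (j-1) 0 / γ j 0) :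
    ∀ j, 2 ≤ j → j ≤ 8*s → ∀ t : ℝ, 0 ≤ t → 1/2 < γ (j-1) t / γ j t := by
  have hderiv : ∀ t, 0 ≤ t → ∀ j ∈ Finset.Icc 2 (8 * s),
      HasDerivAt (γ j) (γ (j - 1) t - γ j t * R t) t := fun t ht j hj =>
    hderivγ j (Finset.mem_Icc.mp hj).1 (Finset.mem_Icc.mp hj).2 t ht
  have hcont : ∀ j ∈ Finset.Icc 2 (8 * s), ContinuousOn (chainGap γ j) (Ici 0) := by
    intro j hj t ht
    obtain ⟨hj2, hj8⟩ := Finset.mem_Icc.mp hj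
    have hprev : ContinuousAt (γ (j - 1)) t := by
      rcases hj2.eq_or_lt with rfl | hj3
      · exact (hderivγ1 t ht).continuousAt
      · exact (hderivγ (j - 1) (by omega) (by omega) t ht).continuousAt
    exact (hprev.sub ((hderiv t ht j hj).continuousAt.div_const 2)).continuousWithinAt
  have hgap : ∀ t, 0 ≤ t → ∀ j ∈ Finset.Icc 2 (8 * s), 0 < chainGap γ j t := by
    by_contra! hbad
    have hgap0 : ∀ j ∈ Finset.Icc 2 (8 * s), 0 < chainGap γ j 0 := fun j hj => by
      obtain ⟨hj2, hj8⟩ := Finset.mem_Icc.mp hj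
      exact (one_half_lt_div_iff_chainGap_pos (hγpos 0 le_rfl j (by omega) hj8)).1
        (hinit j hj2 hj8)
    obtain ⟨T, hT, hbefore, hnonneg, j, hj, hzero⟩ :=
      exists_first_nonpos _ (chainGap γ) hcont hgap0 hbad
    have hs6 : (6 : ℝ) ≤ s := by exact_mod_cast (by omega : 6 ≤ s)
    refine chainGap_ne_zero ?_ hnonneg (hderivγ1 T hT.le) (hderiv T hT.le)
      (div_four_lt_mul_of_bounds hs6 (hδb T hT.le).2 (hΓb T hT.le) (hγ2 T hT.le)) j hj hzero
    filter_upwards [Ioo_mem_nhdsLT hT] with t ht using hbefore t (Ioo_subset_Ico_self ht)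
  intro j hj2 hj8 t ht
  exact (one_half_lt_div_iff_chainGap_pos (hγpos t ht j (by omega) hj8)).2
    (hgap t ht j (Finset.mem_Icc.mpr ⟨hj2, hj8⟩))

theorem stmt_9
    (s : ℕ) (hs : 32 ≤ s)
    (α δ : ℝ → ℝ) (β γ : ℕ → ℝ → ℝ) (B Γ u R : ℝ → ℝ)
    (hB : ∀ t, B t = ∑ j ∈ Finset.Icc 1 (8*s), β j t)
    (hΓ : ∀ t, Γ t = ∑ j ∈ Finset.Icc 1 (8*s), γ j t)
    (hu : ∀ t, u t = 1 - 1/(s:ℝ) - Γ t)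
    (hR : ∀ t, R t = 1 + 1/(2*(s:ℝ)) - δ t / 2 - u t)
    (hderivα : ∀ t : ℝ, 0 ≤ t → HasDerivAt α (-(α t / 2) * (Γ t - B t) + δ t * B t) t)
    (hderivδ : ∀ t : ℝ, 0 ≤ t →
      HasDerivAt δ ((α t / 2) * (Γ t - B t) + ((1/(s:ℝ) - α t - δ t)/2) * B t - δ t * Γ t) t)
    (hderivβ1 : ∀ t : ℝ, 0 ≤ t → HasDerivAt (β 1) (-(β 1 t) * R t + (α t / 2) * Γ t) t)
    (hderivβ : ∀ j, 2 ≤ j → j ≤ 8*s → ∀ t : ℝ, 0 ≤ t →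
      HasDerivAt (β j) (β (j-1) t - β j t * R t) t)
    (hderivγ1 : ∀ t : ℝ, 0 ≤ t →
      HasDerivAt (γ 1) (-(γ 1 t) * R t + (1/(2*(s:ℝ)) - δ t / 2) * Γ t) t)
    (hderivγ : ∀ j, 2 ≤ j → j ≤ 8*s → ∀ t : ℝ, 0 ≤ t →
      HasDerivAt (γ j) (γ (j-1) t - γ j t * R t) t)
    (hγpos : ∀ t : ℝ, 0 ≤ t → ∀ j, 1 ≤ j → j ≤ 8*s → 0 < γ j t)
    (hδb : ∀ t : ℝ, 0 ≤ t → 0 ≤ δ t ∧ δ t ≤ 0.2 / (s:ℝ))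
    (hΓb : ∀ t : ℝ, 0 ≤ t → 1 - 2/(s:ℝ) ≤ Γ t)
    (hγ2 : ∀ t : ℝ, 0 ≤ t → γ 2 t ≤ 1/(s:ℝ))
    (hinit : ∀ j, 2 ≤ j → j ≤ 8*s → 1/2 < γ (j-1) 0 / γ j 0) :
    ∀ j, 2 ≤ j → j ≤ 8*s → ∀ t : ℝ, 0 ≤ t → 1/2 < γ (j-1) t / γ j t :=
  stmt_9_general s hs δ γ Γ R hderivγ1 hderivγ hγpos hδb hΓb hγ2 hinit
end

section
/- Let s ≥ 32, λ ∈ (0, 1), and ρ ∈ (0, 1). Assume the Phase-I standing bounds: for all t ≥ 0, 0 ≤ δ(t) ≤ 0.2/s, γ_j(t) > 0 for all 1 ≤ j ≤ 8s, γ_{j−1}(t)/γ_j(t) ≥ 1/2 for all 2 ≤ j ≤ 8s, γ_1(t) ≤ 1/s, 1 − 2/s ≤ Γ(t) ≤ 1, 1/s − δ(t) > 0, ξ(t) ≥ ρ, η(t) ≥ ρ, and η_j(t) ≥ ρ for all 1 ≤ j ≤ 8s. Then there exists a time T₁ with T₁ ≤ (144/(ρ(1−λ)))·s such that for all t ≥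 T₁ one has ξ(t) > λ and η_j(t) > λ for all 1 ≤ j ≤ 8s; consequently, 2β(t) < 1 − λ for all t ≥ T₁. -/
/-!
Write `X = 1 - ξ` and `Y_j = 1 - η_j`. Since `β_j` and `γ_j` decay at the same rate `R`, the
ratios `Y_j = 2β_j/γ_j` obey the linear chain `Y_j' = c_j (Y_{j-1} - Y_j)` with `Y_0 = X` and
`c_j ≥ 3/8`, while `X' = Γ X(2 - X)/4 · (y - 1) + (δΓ/D)(y - X)` with `D = 1/s - δ` and `y = 1 - η`
a weighted average of the `Y_j`. If all of `X, Y_j` stay below a level `M ≤ 1 - ρ`, this forces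
`X` below `ν = M/(1 + 3ρ/4)` within time `24`, and comparing the chain with its solution driven by
a constant source `ν` (a Poisson distribution function) brings every `Y_j` below
`ν + (M - ν)/5 ≤ M/(1 + ρ/2)` after a further time `5n`, `n = 8s`. About `2/(ρ(1 - λ))` such
rounds push all deficits below `1 - λ`.
-/

open Real Set
open scoped Nat

noncomputable def poissonTerm (i : ℕ) (m : ℝ) : ℝ := exp (-m) * m ^ i / i !

/-- `poissonCdf j m` is `P(N < j)` for `N ∼ Poisson(m)`; in `m` it solves the chain
`p_{j+1}' = p_j - p_{j+1}`, `p_0 = 0`. -/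
noncomputable def poissonCdf (j : ℕ) (m : ℝ) : ℝ := ∑ i ∈ Finset.range j, poissonTerm i m

theorem poissonTerm_nonneg (i : ℕ) {m : ℝ} (hm : 0 ≤ m) : 0 ≤ poissonTerm i m := by
  unfold poissonTerm; positivity

theorem poissonCdf_succ (j : ℕ) (m : ℝ) :
    poissonCdf (j + 1) m = poissonCdf j m + poissonTerm j m :=
  Finset.sum_range_succ _ _

theorem poissonCdf_succ_zero (j : ℕ) : poissonCdf (j + 1) 0 = 1 := by
  rw [poissonCdf, Finset.sum_range_succ']
  simp [poissonTerm]

theorem hasDerivAt_poissonTerm_succ (i : ℕ) (m : ℝ) :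
    HasDerivAt (poissonTerm (i + 1)) (poissonTerm i m - poissonTerm (i + 1) m) m := by
  refine (((hasDerivAt_neg m).exp.mul (hasDerivAt_pow (i + 1) m)).div_const
    ((i + 1)! : ℝ)).congr_deriv ?_
  simp only [poissonTerm, Nat.factorial_succ, Nat.cast_mul, Nat.cast_succ, Nat.add_sub_cancel]
  field_simp
  ring

theorem hasDerivAt_poissonCdf_succ (j : ℕ) (m : ℝ) :
    HasDerivAt (poissonCdf (j + 1)) (-poissonTerm j m) m := by
  induction j with
  | zero =>
    have h1 : poissonCdf 1 = fun x => exp (-x) := by ext x; simp [poissonCdf, poissonTerm]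
    rw [h1]
    exact (hasDerivAt_neg m).exp.congr_deriv (by simp [poissonTerm])
  | succ j ih =>
    have hsplit : poissonCdf (j + 2) = fun x => poissonCdf (j + 1) x + poissonTerm (j + 1) x := by
      ext x; exact poissonCdf_succ (j + 1) x
    rw [hsplit]
    exact (ih.add (hasDerivAt_poissonTerm_succ j m)).congr_deriv (by ring)

theorem poissonCdf_le_exp (j : ℕ) {m : ℝ} (hm : 0 ≤ m) :
    poissonCdf j m ≤ exp (j - (1 - exp (-1)) * m) := by
  have hterm : ∀ i ∈ Finset.range j,
      poissonTerm i m ≤ exp (-m) * exp j * ((exp (-1) * m) ^ i / i !) := by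
    intro i hi
    have hij : (i : ℝ) ≤ j := by exact_mod_cast (Finset.mem_range.1 hi).le
    have hpow : m ^ i ≤ exp j * (exp (-1) * m) ^ i :=
      calc m ^ i = exp i * (exp (-1) * m) ^ i := by
            rw [mul_pow, ← mul_assoc, ← exp_nat_mul, ← exp_add]; simp
        _ ≤ exp j * (exp (-1) * m) ^ i := by gcongr
    calc poissonTerm i m = exp (-m) * (m ^ i / i !) := mul_div_assoc _ _ _
      _ ≤ exp (-m) * (exp j * (exp (-1) * m) ^ i / i !) := by gcongr
      _ = _ := by ring
  calc poissonCdf j m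
      ≤ ∑ i ∈ Finset.range j, exp (-m) * exp j * ((exp (-1) * m) ^ i / i !) :=
        Finset.sum_le_sum hterm
    _ ≤ exp (-m) * exp j * exp (exp (-1) * m) := by
        rw [← Finset.mul_sum]; gcongr; exact sum_le_exp_of_nonneg (by positivity) j
    _ = exp (j - (1 - exp (-1)) * m) := by rw [← exp_add, ← exp_add]; ring_nf

theorem poissonCdf_le_one_fifth {j n : ℕ} {m : ℝ} (hjn : j ≤ n) (hn : 16 ≤ n)
    (hm : 15 * n / 8 ≤ m) : poissonCdf j m ≤ 1 / 5 := by
  have hj : (j : ℝ) ≤ n := by exact_mod_cast hjn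
  have hn' : (16 : ℝ) ≤ n := by exact_mod_cast hn
  have he1 : exp (-1) ≤ 2 / 5 := by
    rw [exp_neg, inv_le_comm₀ (exp_pos 1) (by norm_num)]
    linarith [quadratic_le_exp_of_nonneg zero_le_one]
  have he2 : exp (-2) ≤ 1 / 5 := by
    rw [exp_neg, inv_le_comm₀ (exp_pos 2) (by norm_num)]
    linarith [quadratic_le_exp_of_nonneg zero_le_two]
  have hm0 : 0 ≤ m := le_trans (by positivity) hm
  calc poissonCdf j m ≤ exp (j - (1 - exp (-1)) * m) := poissonCdf_le_exp j hm0
    _ ≤ exp (-2) := exp_le_exp.2 (by nlinarith)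
    _ ≤ 1 / 5 := he2

theorem image_le_of_hasDerivAt_lt_deriv_boundary {f f' B B' : ℝ → ℝ} {a b : ℝ}
    (hf : ∀ x ∈ Icc a b, HasDerivAt f (f' x) x) (ha : f a ≤ B a)
    (hB : ∀ x, HasDerivAt B (B' x) x) (bound : ∀ x ∈ Ico a b, f x = B x → f' x < B' x) :
    ∀ ⦃x⦄, x ∈ Icc a b → f x ≤ B x :=
  image_le_of_deriv_right_lt_deriv_boundary (fun x hx => (hf x hx).continuousAt.continuousWithinAt)
    (fun x hx => (hf x (Ico_subset_Icc_self hx)).hasDerivWithinAt) ha hB bound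

theorem le_of_hasDerivAt_lt_neg {f f' : ℝ → ℝ} {T c M ε : ℝ} (hε : 0 < ε) (hcM : c ≤ M)
    (hf : ∀ t ≥ T, HasDerivAt f (f' t) t) (hslope : ∀ t ≥ T, c ≤ f t → f' t < -ε)
    (hT : f T ≤ M) : ∀ t ≥ T + (M - c) / ε, f t ≤ c := by
  set T₁ := T + (M - c) / ε
  have hTT₁ : T ≤ T₁ := le_add_of_nonneg_right (div_nonneg (sub_nonneg.2 hcM) hε.le)
  have hreach : f T₁ ≤ M - ε * (T₁ - T) := by
    refine image_le_of_hasDerivAt_lt_deriv_boundary (fun x hx => hf x hx.1) (by simpa using hT)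
      (fun x => (((hasDerivAt_id' x).sub_const T).const_mul ε).const_sub M)
      (fun x hx hfx => (hslope x hx.1 ?_).trans_eq (by simp)) ⟨hTT₁, le_rfl⟩
    have : ε * (x - T) < M - c := by
      rw [← lt_div_iff₀' hε]; linarith [hx.2]
    linarith
  have hc : M - ε * (T₁ - T) = c := by
    simp only [T₁, add_sub_cancel_left]; field_simp; ring
  intro t ht
  exact image_le_of_hasDerivAt_lt_deriv_boundary (fun x hx => hf x (hTT₁.trans hx.1))
    (hreach.trans_eq hc) (fun x => hasDerivAt_const x c)
    (fun x hx hfx => (hslope x (hTT₁.trans hx.1) hfx.ge).trans (by linarith)) ⟨ht, le_rfl⟩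

theorem le_poissonCdf_of_hasDerivAt_chain {n : ℕ} {W : ℕ → ℝ → ℝ} {κ ν M T : ℝ}
    (hκ : 0 < κ) (hνM : ν ≤ M)
    (hW : ∀ j, 1 ≤ j → j ≤ n → ∀ t ≥ T, ∃ c ≥ κ, HasDerivAt (W j) (c * (W (j - 1) t - W j t)) t)
    (hsource : ∀ t ≥ T, W 0 t ≤ ν) (hinit : ∀ j, 1 ≤ j → j ≤ n → W j T ≤ M) :
    ∀ j ≤ n, ∀ t ≥ T, W j t ≤ ν + (M - ν) * poissonCdf j (κ * (t - T)) := by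
  intro j
  induction j with
  | zero => intro _ t ht; simpa [poissonCdf] using hsource t ht
  | succ j ih =>
    intro hj t ht
    have hW' := hW (j + 1) (by omega) hj
    simp only [Nat.add_sub_cancel] at hW'
    have hdiff : ∀ x ∈ Icc T t, HasDerivAt (W (j + 1)) (deriv (W (j + 1)) x) x := fun x hx =>
      let ⟨_, _, hd⟩ := hW' x hx.1
      hd.differentiableAt.hasDerivAt
    -- the slack `ε` makes the contact inequality strict
    refine le_of_forall_pos_le_add fun ε hε => ?_
    have hB : ∀ x, HasDerivAt (fun x => ν + (M - ν) * poissonCdf (j + 1) (κ * (x - T)) + ε)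
        ((M - ν) * (-poissonTerm j (κ * (x - T)) * κ)) x := fun x =>
      ((((hasDerivAt_poissonCdf_succ j _).comp x
        (((hasDerivAt_id x).sub_const T).const_mul κ)).congr_deriv (by simp)).const_mul
          (M - ν) |>.const_add ν).add_const ε
    refine image_le_of_hasDerivAt_lt_deriv_boundary hdiff ?_ hB ?_ ⟨ht, le_rfl⟩
    · simp only [sub_self, mul_zero, poissonCdf_succ_zero]
      linarith [hinit (j + 1) (by omega) hj]
    · intro x hx hcontact
      obtain ⟨c, hc, hd⟩ := hW' x hx.1
      have hterm : 0 ≤ (M - ν) * poissonTerm j (κ * (x - T)) :=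
        mul_nonneg (sub_nonneg.2 hνM) (poissonTerm_nonneg j (by nlinarith [hx.1]))
      have hgap : W j x - W (j + 1) x ≤ -((M - ν) * poissonTerm j (κ * (x - T))) - ε := by
        rw [poissonCdf_succ] at hcontact
        linarith [ih (by omega) x hx.1]
      rw [hd.deriv]
      calc c * (W j x - W (j + 1) x) ≤ κ * (W j x - W (j + 1) x) :=
            mul_le_mul_of_nonpos_right hc (by linarith)
        _ ≤ κ * (-((M - ν) * poissonTerm j (κ * (x - T))) - ε) := by gcongr
        _ < _ := by linarith [mul_pos hκ hε]

/-- `W 0` models `1 - ξ`, `W j` models `1 - η_j`, and `y` models `1 - η`. -/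
structure IsAdvantageFlow (n : ℕ) (W : ℕ → ℝ → ℝ) : Prop where
  source : ∀ t ≥ 0, ∃ G q y : ℝ, 15 / 16 ≤ G ∧ 0 ≤ q ∧ q ≤ 1 / 4 ∧
    (∀ m, (∀ j, 1 ≤ j → j ≤ n → W j t ≤ m) → y ≤ m) ∧
    HasDerivAt (W 0) (G * (W 0 t * (2 - W 0 t) / 4) * (y - 1) + q * (y - W 0 t)) t
  chain : ∀ j, 1 ≤ j → j ≤ n → ∀ t ≥ 0,
    ∃ c ≥ 3 / 8, HasDerivAt (W j) (c * (W (j - 1) t - W j t)) t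

theorem source_slope_lt {G q x y ρ ν : ℝ} (hG : 15 / 16 ≤ G) (hq0 : 0 ≤ q) (hq : q ≤ 1 / 4)
    (hρ : 0 < ρ) (hν : 0 < ν) (hνx : ν ≤ x) (hx : x ≤ 1) (hyν : y ≤ ν * (1 + 3 * ρ / 4))
    (hyρ : y ≤ 1 - ρ) :
    G * (x * (2 - x) / 4) * (y - 1) + q * (y - x) < -(ρ * ν / 32) := by
  have hdrift : G * (x * (2 - x) / 4) * (y - 1) ≤ -(15 / 64 * (ρ * ν)) := by
    have hx2 : ν ≤ x * (2 - x) := by nlinarith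
    have : 15 / 16 * ν ≤ G * (x * (2 - x)) := by nlinarith
    nlinarith
  have hmix : q * (y - x) ≤ 3 / 16 * (ρ * ν) := by
    rcases le_total y x with hyx | hxy
    · nlinarith
    · nlinarith
  nlinarith [mul_pos hρ hν]

namespace IsAdvantageFlow

variable {n : ℕ} {W : ℕ → ℝ → ℝ} {ρ : ℝ}

theorem le_div_of_le (hW : IsAdvantageFlow n W) (hn : 16 ≤ n) (hρ : 0 < ρ)
    {M T : ℝ} (hM : 0 < M) (hMρ : M ≤ 1 - ρ) (hT : 0 ≤ T) (hle : ∀ t ≥ T, ∀ j ≤ n, W j t ≤ M) :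
    ∀ t ≥ T + (24 + 5 * n), ∀ j ≤ n, W j t ≤ M / (1 + ρ / 2) := by
  set ν := M / (1 + 3 * ρ / 4)
  have hνM : ν * (1 + 3 * ρ / 4) = M := div_mul_cancel₀ M (by positivity)
  have hν : 0 < ν := by positivity
  have hε : 0 < ρ * ν / 32 := by positivity
  have hdesc : ∀ t ≥ T + 24, W 0 t ≤ ν := by
    have hlen : (M - ν) / (ρ * ν / 32) = 24 := by
      rw [div_eq_iff hε.ne', ← hνM]; ring
    rw [← hlen]
    refine le_of_hasDerivAt_lt_neg (f' := deriv (W 0)) hε (by nlinarith)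
      (fun t ht => ?_) (fun t ht hνt => ?_) (hle T le_rfl 0 n.zero_le)
    · obtain ⟨G, q, y, -, -, -, -, hd⟩ := hW.source t (hT.trans ht)
      exact hd.differentiableAt.hasDerivAt
    · obtain ⟨G, q, y, hG, hq0, hq, hy, hd⟩ := hW.source t (hT.trans ht)
      have hyM := hy M fun j _ hj => hle t ht j hj
      rw [hd.deriv]
      exact source_slope_lt hG hq0 hq hρ hν hνt (by linarith [hle t ht 0 n.zero_le])
        (hνM ▸ hyM) (hyM.trans hMρ)
  have hchain := le_poissonCdf_of_hasDerivAt_chain (by norm_num) (by nlinarith)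
    (fun j hj1 hjn t ht => hW.chain j hj1 hjn t (by linarith)) hdesc
    (fun j _ hjn => hle (T + 24) (by linarith) j hjn)
  intro t ht j hj
  have htail : poissonCdf j (3 / 8 * (t - (T + 24))) ≤ 1 / 5 :=
    poissonCdf_le_one_fifth hj hn (by linarith)
  calc W j t ≤ ν + (M - ν) * poissonCdf j (3 / 8 * (t - (T + 24))) :=
        hchain j hj t (by linarith)
    _ ≤ ν + (M - ν) * (1 / 5) := by gcongr; nlinarith
    _ ≤ M / (1 + ρ / 2) := by
        rw [le_div_iff₀ (by positivity), ← hνM]; nlinarith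

theorem le_div_pow (hW : IsAdvantageFlow n W) (hn : 16 ≤ n) (hρ : 0 < ρ) (hρ1 : ρ < 1)
    (hbase : ∀ t ≥ 0, ∀ j ≤ n, W j t ≤ 1 - ρ) (k : ℕ) :
    ∀ t ≥ (k : ℝ) * (24 + 5 * n), ∀ j ≤ n, W j t ≤ (1 - ρ) / (1 + ρ / 2) ^ k := by
  induction k with
  | zero => simpa using hbase
  | succ k ih =>
    intro t ht
    rw [pow_succ, ← div_div]
    refine hW.le_div_of_le hn hρ (div_pos (by linarith) (by positivity))
      (div_le_self (by linarith) (one_le_pow₀ (by linarith))) (by positivity) ih t ?_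
    push_cast at ht
    linarith

end IsAdvantageFlow

theorem exists_nat_le_and_div_pow_lt {ρ lam : ℝ} (hρ : 0 < ρ) (hρ1 : ρ < 1) (hlam : 0 < lam)
    (hlam1 : lam < 1) :
    ∃ K : ℕ, (K : ℝ) ≤ 3 / (ρ * (1 - lam)) ∧ (1 - ρ) / (1 + ρ / 2) ^ K < 1 - lam := by
  have hp : 0 < ρ * (1 - lam) := mul_pos hρ (by linarith)
  have hp1 : ρ * (1 - lam) ≤ 1 := by nlinarith
  set K := ⌈2 / (ρ * (1 - lam))⌉₊
  refine ⟨K, ?_, ?_⟩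
  · calc (K : ℝ) ≤ 2 / (ρ * (1 - lam)) + 1 := (Nat.ceil_lt_add_one (by positivity)).le
      _ ≤ 3 / (ρ * (1 - lam)) := by
        rw [div_add_one hp.ne', div_le_div_iff_of_pos_right hp]; linarith
  · have hK : 2 ≤ K * (ρ * (1 - lam)) := (div_le_iff₀ hp).1 (Nat.le_ceil _)
    have hbern : 1 + K * (ρ / 2) ≤ (1 + ρ / 2) ^ K := one_add_mul_le_pow (by linarith) K
    rw [div_lt_iff₀ (by positivity)]
    nlinarith

theorem HasDerivAt.div_of_common_rate {f g : ℝ → ℝ} {a b r t : ℝ}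
    (hf : HasDerivAt f (a - f t * r) t) (hg : HasDerivAt g (b - g t * r) t) (hg0 : g t ≠ 0)
    (hb : b ≠ 0) : HasDerivAt (fun u => f u / g u) (b / g t * (a / b - f t / g t)) t :=
  (hf.div hg hg0).congr_deriv (by field_simp; ring)

theorem hasDerivAt_source_ratio {α δ : ℝ → ℝ} {σ G B x y t : ℝ}
    (hα : HasDerivAt α (-(α t / 2) * (G - B) + δ t * B) t)
    (hδ : HasDerivAt δ (α t / 2 * (G - B) + (σ - α t - δ t) / 2 * B - δ t * G) t)
    (hD : σ - δ t ≠ 0) (hG : G ≠ 0) (hx : 2 * α t / (σ - δ t) = x) (hy : 2 * B / G = y) :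
    HasDerivAt (fun u => 2 * α u / (σ - δ u))
      (G * (x * (2 - x) / 4) * (y - 1) + δ t * G / (σ - δ t) * (y - x)) t := by
  subst hx hy
  refine ((hα.const_mul 2).div (hδ.const_sub σ) hD).congr_deriv ?_
  field_simp
  ring

theorem sum_le_mul_sum_of_div_le {ι : Type*} {s : Finset ι} {f g : ι → ℝ} {m : ℝ}
    (hg : ∀ i ∈ s, 0 < g i) (h : ∀ i ∈ s, f i / g i ≤ m) : ∑ i ∈ s, f i ≤ m * ∑ i ∈ s, g i := by
  rw [Finset.mul_sum]
  exact Finset.sum_le_sum fun i hi => (div_le_iff₀ (hg i hi)).1 (h i hi)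

/-- `1 - ξ` at index `0` and `1 - η_j` at index `j ≥ 1`. -/
noncomputable def advantageDeficit (s : ℕ) (α δ : ℝ → ℝ) (β γ : ℕ → ℝ → ℝ) : ℕ → ℝ → ℝ
  | 0 => fun t => 2 * α t / (1 / s - δ t)
  | j + 1 => fun t => 2 * β (j + 1) t / γ (j + 1) t

theorem advantageDeficit_of_pos {s : ℕ} {α δ : ℝ → ℝ} {β γ : ℕ → ℝ → ℝ} {j : ℕ} (hj : 1 ≤ j) :
    advantageDeficit s α δ β γ j = fun t => 2 * β j t / γ j t := by
  obtain ⟨k, rfl⟩ := Nat.exists_eq_add_of_le' hj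
  rfl

theorem two_mul_le_of_advantageDeficit_le {s : ℕ} {α δ : ℝ → ℝ} {β γ : ℕ → ℝ → ℝ}
    {B Γ : ℝ → ℝ} (hB : ∀ t, B t = ∑ j ∈ Finset.Icc 1 (8*s), β j t)
    (hΓ : ∀ t, Γ t = ∑ j ∈ Finset.Icc 1 (8*s), γ j t)
    (hγpos : ∀ t : ℝ, 0 ≤ t → ∀ j, 1 ≤ j → j ≤ 8*s → 0 < γ j t) {t m : ℝ} (ht : 0 ≤ t)
    (hm : ∀ j, 1 ≤ j → j ≤ 8 * s → advantageDeficit s α δ β γ j t ≤ m) :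
    2 * B t ≤ m * Γ t := by
  rw [hB, hΓ, Finset.mul_sum]
  refine sum_le_mul_sum_of_div_le (fun j hj => ?_) (fun j hj => ?_) <;>
    obtain ⟨hj1, hjn⟩ := Finset.mem_Icc.1 hj
  · exact hγpos t ht j hj1 hjn
  · simpa [advantageDeficit_of_pos hj1] using hm j hj1 hjn

theorem hasDerivAt_chain_head {s : ℕ} {α δ β₁ γ₁ : ℝ → ℝ} {G r t : ℝ}
    (hβ : HasDerivAt β₁ (-(β₁ t) * r + α t / 2 * G) t)
    (hγ : HasDerivAt γ₁ (-(γ₁ t) * r + (1 / (2 * (s : ℝ)) - δ t / 2) * G) t)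
    (hD : 1 / (s : ℝ) - δ t ≠ 0) (hG : G ≠ 0) (hγ₁ : γ₁ t ≠ 0) :
    HasDerivAt (fun u => 2 * β₁ u / γ₁ u) ((1 / s - δ t) * G / 2 / γ₁ t *
      (2 * α t / (1 / s - δ t) - 2 * β₁ t / γ₁ t)) t := by
  have hb : (1 / (2 * (s : ℝ)) - δ t / 2) * G = (1 / s - δ t) * G / 2 := by ring
  have hβ' := (hβ.const_mul 2).congr_deriv (show _ = α t * G - 2 * β₁ t * r by ring)
  have hγ' := hγ.congr_deriv (show _ = (1 / s - δ t) * G / 2 - γ₁ t * r by rw [← hb]; ring)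
  refine (hβ'.div_of_common_rate hγ' hγ₁
    (div_ne_zero (mul_ne_zero hD hG) two_ne_zero)).congr_deriv ?_
  field_simp

theorem isAdvantageFlow_advantageDeficit {s : ℕ} (hs : 32 ≤ s) {α δ : ℝ → ℝ}
    {β γ : ℕ → ℝ → ℝ} {B Γ R : ℝ → ℝ}
    (hB : ∀ t, B t = ∑ j ∈ Finset.Icc 1 (8*s), β j t)
    (hΓ : ∀ t, Γ t = ∑ j ∈ Finset.Icc 1 (8*s), γ j t)
    (hderivα : ∀ t : ℝ, 0 ≤ t → HasDerivAt α (-(α t / 2) * (Γ t - B t) + δ t * B t) t)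
    (hderivδ : ∀ t : ℝ, 0 ≤ t →
      HasDerivAt δ ((α t / 2) * (Γ t - B t) + ((1/(s:ℝ) - α t - δ t)/2) * B t - δ t * Γ t) t)
    (hderivβ1 : ∀ t : ℝ, 0 ≤ t → HasDerivAt (β 1) (-(β 1 t) * R t + (α t / 2) * Γ t) t)
    (hderivβ : ∀ j, 2 ≤ j → j ≤ 8*s → ∀ t : ℝ, 0 ≤ t →
      HasDerivAt (β j) (β (j-1) t - β j t * R t) t)
    (hderivγ1 : ∀ t : ℝ, 0 ≤ t →
      HasDerivAt (γ 1) (-(γ 1 t) * R t + (1/(2*(s:ℝ)) - δ t / 2) * Γ t) t)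
    (hderivγ : ∀ j, 2 ≤ j → j ≤ 8*s → ∀ t : ℝ, 0 ≤ t →
      HasDerivAt (γ j) (γ (j-1) t - γ j t * R t) t)
    (hδb : ∀ t : ℝ, 0 ≤ t → 0 ≤ δ t ∧ δ t ≤ 0.2 / (s:ℝ))
    (hγpos : ∀ t : ℝ, 0 ≤ t → ∀ j, 1 ≤ j → j ≤ 8*s → 0 < γ j t)
    (hγratio : ∀ t : ℝ, 0 ≤ t → ∀ j, 2 ≤ j → j ≤ 8*s → 1/2 ≤ γ (j-1) t / γ j t)
    (hγ1b : ∀ t : ℝ, 0 ≤ t → γ 1 t ≤ 1/(s:ℝ))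
    (hΓb : ∀ t : ℝ, 0 ≤ t → 1 - 2/(s:ℝ) ≤ Γ t ∧ Γ t ≤ 1)
    (hδlt : ∀ t : ℝ, 0 ≤ t → 0 < 1/(s:ℝ) - δ t) :
    IsAdvantageFlow (8 * s) (advantageDeficit s α δ β γ) := by
  have hs' : (32 : ℝ) ≤ s := by exact_mod_cast hs
  have hΓlb : ∀ t ≥ 0, 15 / 16 ≤ Γ t := fun t ht => by
    have : (2 : ℝ) / s ≤ 1 / 16 := by rw [div_le_iff₀ (by positivity)]; linarith
    linarith [(hΓb t ht).1]
  have hδs : ∀ t ≥ 0, 5 * δ t ≤ 1 / s := fun t ht =>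
    calc 5 * δ t ≤ 5 * (0.2 / s) := by linarith [(hδb t ht).2]
      _ = 1 / s := by ring
  constructor
  · intro t ht
    have hD := hδlt t ht
    have hΓ0 : 0 < Γ t := by linarith [hΓlb t ht]
    refine ⟨Γ t, δ t * Γ t / (1 / s - δ t), 2 * B t / Γ t, hΓlb t ht,
      div_nonneg (mul_nonneg (hδb t ht).1 hΓ0.le) hD.le, ?_, fun m hm => ?_,
      hasDerivAt_source_ratio (hderivα t ht) (hderivδ t ht) hD.ne' hΓ0.ne' rfl rfl⟩
    · rw [div_le_iff₀ hD]
      nlinarith [(hδb t ht).1, (hΓb t ht).2, hδs t ht]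
    · rw [div_le_iff₀ hΓ0]
      exact two_mul_le_of_advantageDeficit_le hB hΓ hγpos ht hm
  · intro j hj1 hjn t ht
    have hγj := hγpos t ht j hj1 hjn
    rcases hj1.eq_or_lt with rfl | hj2
    · have hD := hδlt t ht
      have hΓ0 : 0 < Γ t := by linarith [hΓlb t ht]
      refine ⟨_, ?_, hasDerivAt_chain_head (hderivβ1 t ht) (hderivγ1 t ht) hD.ne' hΓ0.ne'
        hγj.ne'⟩
      rw [ge_iff_le, le_div_iff₀ hγj]
      nlinarith [hΓlb t ht, hγ1b t ht, hδs t ht]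
    · obtain ⟨k, rfl⟩ : ∃ k, j = k + 2 := ⟨j - 2, by omega⟩
      have hγk := hγpos t ht (k + 1) (by omega) (by omega)
      have hk : k + 2 - 1 = k + 1 := rfl
      have hβ := ((hderivβ (k + 2) hj2 hjn t ht).const_mul 2).congr_deriv
        (show _ = 2 * β (k + 1) t - 2 * β (k + 2) t * R t by rw [hk]; ring)
      have hγ := hderivγ (k + 2) hj2 hjn t ht
      rw [hk] at hγ
      refine ⟨γ (k + 1) t / γ (k + 2) t, ?_,
        (hβ.div_of_common_rate hγ hγj.ne' hγk.ne').congr_deriv (by simp [advantageDeficit])⟩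
      have := hγratio t ht (k + 2) hj2 hjn
      rw [hk] at this
      linarith

theorem stmt_10_general
    (s : ℕ) (hs : 32 ≤ s)
    (α δ : ℝ → ℝ) (β γ : ℕ → ℝ → ℝ) (B Γ R : ℝ → ℝ)
    (hB : ∀ t, B t = ∑ j ∈ Finset.Icc 1 (8*s), β j t)
    (hΓ : ∀ t, Γ t = ∑ j ∈ Finset.Icc 1 (8*s), γ j t)
    (hderivα : ∀ t : ℝ, 0 ≤ t → HasDerivAt α (-(α t / 2) * (Γ t - B t) + δ t * B t) t)
    (hderivδ : ∀ t : ℝ, 0 ≤ t →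
      HasDerivAt δ ((α t / 2) * (Γ t - B t) + ((1/(s:ℝ) - α t - δ t)/2) * B t - δ t * Γ t) t)
    (hderivβ1 : ∀ t : ℝ, 0 ≤ t → HasDerivAt (β 1) (-(β 1 t) * R t + (α t / 2) * Γ t) t)
    (hderivβ : ∀ j, 2 ≤ j → j ≤ 8*s → ∀ t : ℝ, 0 ≤ t →
      HasDerivAt (β j) (β (j-1) t - β j t * R t) t)
    (hderivγ1 : ∀ t : ℝ, 0 ≤ t →
      HasDerivAt (γ 1) (-(γ 1 t) * R t + (1/(2*(s:ℝ)) - δ t / 2) * Γ t) t)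
    (hderivγ : ∀ j, 2 ≤ j → j ≤ 8*s → ∀ t : ℝ, 0 ≤ t →
      HasDerivAt (γ j) (γ (j-1) t - γ j t * R t) t)
    (ξ : ℝ → ℝ) (ηj : ℕ → ℝ → ℝ)
    (hξ : ∀ t, ξ t = (1/(s:ℝ) - δ t - 2 * α t) / (1/(s:ℝ) - δ t))
    (hηj : ∀ j, 1 ≤ j → j ≤ 8*s → ∀ t, ηj j t = (γ j t - 2 * β j t) / γ j t)
    (lam ρ : ℝ) (hlam : 0 < lam) (hlam1 : lam < 1) (hρ : 0 < ρ) (hρ1 : ρ < 1)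
    (hδb : ∀ t : ℝ, 0 ≤ t → 0 ≤ δ t ∧ δ t ≤ 0.2 / (s:ℝ))
    (hγpos : ∀ t : ℝ, 0 ≤ t → ∀ j, 1 ≤ j → j ≤ 8*s → 0 < γ j t)
    (hγratio : ∀ t : ℝ, 0 ≤ t → ∀ j, 2 ≤ j → j ≤ 8*s → 1/2 ≤ γ (j-1) t / γ j t)
    (hγ1b : ∀ t : ℝ, 0 ≤ t → γ 1 t ≤ 1/(s:ℝ))
    (hΓb : ∀ t : ℝ, 0 ≤ t → 1 - 2/(s:ℝ) ≤ Γ t ∧ Γ t ≤ 1)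
    (hδlt : ∀ t : ℝ, 0 ≤ t → 0 < 1/(s:ℝ) - δ t)
    (hξρ : ∀ t : ℝ, 0 ≤ t → ρ ≤ ξ t)
    (hηjρ : ∀ t : ℝ, 0 ≤ t → ∀ j, 1 ≤ j → j ≤ 8*s → ρ ≤ ηj j t) :
    ∃ T₁ : ℝ, 0 ≤ T₁ ∧ T₁ ≤ (144 / (ρ * (1 - lam))) * (s:ℝ) ∧
      ∀ t : ℝ, T₁ ≤ t → lam < ξ t ∧ (∀ j, 1 ≤ j → j ≤ 8*s → lam < ηj j t) ∧
        2 * B t < 1 - lam := by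
  have hs' : (32 : ℝ) ≤ s := by exact_mod_cast hs
  set W := advantageDeficit s α δ β γ with hW
  have hflow : IsAdvantageFlow (8 * s) W := isAdvantageFlow_advantageDeficit hs hB hΓ hderivα
    hderivδ hderivβ1 hderivβ hderivγ1 hderivγ hδb hγpos hγratio hγ1b hΓb hδlt
  have hξW : ∀ t ≥ 0, ξ t = 1 - W 0 t := fun t ht => by
    rw [hξ]; exact (one_sub_div (hδlt t ht).ne').symm
  have hηW : ∀ t ≥ 0, ∀ j, 1 ≤ j → j ≤ 8 * s → ηj j t = 1 - W j t := fun t ht j hj1 hjn => by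
    rw [hηj j hj1 hjn, hW, advantageDeficit_of_pos hj1]
    exact (one_sub_div (hγpos t ht j hj1 hjn).ne').symm
  have hbase : ∀ t ≥ 0, ∀ j ≤ 8 * s, W j t ≤ 1 - ρ := fun t ht j hjn => by
    rcases j.eq_zero_or_pos with rfl | hj1
    · linarith [hξρ t ht, hξW t ht]
    · linarith [hηjρ t ht j hj1 hjn, hηW t ht j hj1 hjn]
  obtain ⟨K, hK, hMK⟩ := exists_nat_le_and_div_pow_lt hρ hρ1 hlam hlam1
  refine ⟨K * (24 + 5 * ((8 * s : ℕ) : ℝ)), by positivity, ?_, fun t ht => ?_⟩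
  · push_cast
    calc (K : ℝ) * (24 + 5 * (8 * s)) ≤ 3 / (ρ * (1 - lam)) * (48 * s) := by gcongr; linarith
      _ = 144 / (ρ * (1 - lam)) * s := by ring
  have ht0 : 0 ≤ t := le_trans (by positivity) ht
  have hWt : ∀ j ≤ 8 * s, W j t < 1 - lam := fun j hjn =>
    (hflow.le_div_pow (by omega) hρ hρ1 hbase K t ht j hjn).trans_lt hMK
  refine ⟨by linarith [hξW t ht0, hWt 0 (Nat.zero_le _)],
    fun j hj1 hjn => by linarith [hηW t ht0 j hj1 hjn, hWt j hjn], ?_⟩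
  have hMK0 : 0 ≤ (1 - ρ) / (1 + ρ / 2) ^ K := div_nonneg (by linarith) (by positivity)
  calc 2 * B t ≤ (1 - ρ) / (1 + ρ / 2) ^ K * Γ t := two_mul_le_of_advantageDeficit_le hB hΓ hγpos
        ht0 fun j _ hjn => hflow.le_div_pow (by omega) hρ hρ1 hbase K t ht j hjn
    _ ≤ (1 - ρ) / (1 + ρ / 2) ^ K := mul_le_of_le_one_right hMK0 (hΓb t ht0).2
    _ < 1 - lam := hMK

theorem stmt_10
    (s : ℕ) (hs : 32 ≤ s)
    (α δ : ℝ → ℝ) (β γ : ℕ → ℝ → ℝ) (B Γ u R : ℝ → ℝ)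
    (hB : ∀ t, B t = ∑ j ∈ Finset.Icc 1 (8*s), β j t)
    (hΓ : ∀ t, Γ t = ∑ j ∈ Finset.Icc 1 (8*s), γ j t)
    (hu : ∀ t, u t = 1 - 1/(s:ℝ) - Γ t)
    (hR : ∀ t, R t = 1 + 1/(2*(s:ℝ)) - δ t / 2 - u t)
    (hderivα : ∀ t : ℝ, 0 ≤ t → HasDerivAt α (-(α t / 2) * (Γ t - B t) + δ t * B t) t)
    (hderivδ : ∀ t : ℝ, 0 ≤ t →
      HasDerivAt δ ((α t / 2) * (Γ t - B t) + ((1/(s:ℝ) - α t - δ t)/2) * B t - δ t * Γ t) t)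
    (hderivβ1 : ∀ t : ℝ, 0 ≤ t → HasDerivAt (β 1) (-(β 1 t) * R t + (α t / 2) * Γ t) t)
    (hderivβ : ∀ j, 2 ≤ j → j ≤ 8*s → ∀ t : ℝ, 0 ≤ t →
      HasDerivAt (β j) (β (j-1) t - β j t * R t) t)
    (hderivγ1 : ∀ t : ℝ, 0 ≤ t →
      HasDerivAt (γ 1) (-(γ 1 t) * R t + (1/(2*(s:ℝ)) - δ t / 2) * Γ t) t)
    (hderivγ : ∀ j, 2 ≤ j → j ≤ 8*s → ∀ t : ℝ, 0 ≤ t →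
      HasDerivAt (γ j) (γ (j-1) t - γ j t * R t) t)
    (ξ η : ℝ → ℝ) (ηj : ℕ → ℝ → ℝ)
    (hξ : ∀ t, ξ t = (1/(s:ℝ) - δ t - 2 * α t) / (1/(s:ℝ) - δ t))
    (hηj : ∀ j, 1 ≤ j → j ≤ 8*s → ∀ t, ηj j t = (γ j t - 2 * β j t) / γ j t)
    (hη : ∀ t, η t = (Γ t - 2 * B t) / Γ t)
    (lam ρ : ℝ) (hlam : 0 < lam) (hlam1 : lam < 1) (hρ : 0 < ρ) (hρ1 : ρ < 1)
    (hδb : ∀ t : ℝ, 0 ≤ t → 0 ≤ δ t ∧ δ t ≤ 0.2 / (s:ℝ))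
    (hγpos : ∀ t : ℝ, 0 ≤ t → ∀ j, 1 ≤ j → j ≤ 8*s → 0 < γ j t)
    (hγratio : ∀ t : ℝ, 0 ≤ t → ∀ j, 2 ≤ j → j ≤ 8*s → 1/2 ≤ γ (j-1) t / γ j t)
    (hγ1b : ∀ t : ℝ, 0 ≤ t → γ 1 t ≤ 1/(s:ℝ))
    (hΓb : ∀ t : ℝ, 0 ≤ t → 1 - 2/(s:ℝ) ≤ Γ t ∧ Γ t ≤ 1)
    (hδlt : ∀ t : ℝ, 0 ≤ t → 0 < 1/(s:ℝ) - δ t)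
    (hξρ : ∀ t : ℝ, 0 ≤ t → ρ ≤ ξ t)
    (hηρ : ∀ t : ℝ, 0 ≤ t → ρ ≤ η t)
    (hηjρ : ∀ t : ℝ, 0 ≤ t → ∀ j, 1 ≤ j → j ≤ 8*s → ρ ≤ ηj j t) :
    ∃ T₁ : ℝ, 0 ≤ T₁ ∧ T₁ ≤ (144 / (ρ * (1 - lam))) * (s:ℝ) ∧
      ∀ t : ℝ, T₁ ≤ t → lam < ξ t ∧ (∀ j, 1 ≤ j → j ≤ 8*s → lam < ηj j t) ∧
        2 * B t < 1 - lam :=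
  stmt_10_general s hs α δ β γ B Γ R hB hΓ hderivα hderivδ hderivβ1 hderivβ hderivγ1 hderivγ ξ ηj hξ
    hηj lam ρ hlam hlam1 hρ hρ1 hδb hγpos hγratio hγ1b hΓb hδlt hξρ hηjρ
end

section
/- Let s ≥ 32, let T₁ ≥ 0, and define Λ₂(t) = α(t) + δ(t)/16 + β(t)/4. Assume that for all t ≥ T₁ the variables satisfy α(t) ≥ 0, δ(t) ≥ 0, β_j(t) ≥ 0 for all 1 ≤ j ≤ 8s, 1 − 2/s ≤ Γ(t) ≤ 1, R(t) ≥ 1 + 1/(4s), and β(t) ≤ 1/64. Then Λ₂'(t) ≤ −Λ₂(t)/(8s) for all t ≥ T₁, and consequently Λ₂(t) ≤ Λ₂(T₁)·e^{−(t−T₁)/(8s)} for all t ≥ T₁. -/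
/-!
Λ₂ = α + δ/16 + β/4 is a Lyapunov function. The cascade β₁' = αΓ/2 − β₁R, βⱼ' = βⱼ₋₁ − βⱼR
telescopes to β' = αΓ/2 + β − β₈ₛ − βR. Substituting into Λ₂' = α' + δ'/16 + β'/4 gives
α(14β − 11Γ)/32 + δ(31β/32 − Γ/16) + β(1/(32s) + (1 − R)/4) − β₈ₛ/4, and under the hypotheses
each coefficient is at most the matching coefficient of −Λ₂/(8s) (for β with equality when
R = 1 + 1/(4s)). Grönwall's inequality turns Λ₂' ≤ −Λ₂/(8s) into exponential decay.
-/

open Finset Real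

theorem hasDerivAt_sum_Icc_of_cascade {β : ℕ → ℝ → ℝ} {f r t : ℝ} {n : ℕ} (hn : 1 ≤ n)
    (hβ₁ : HasDerivAt (β 1) (-(β 1 t) * r + f) t)
    (hβ : ∀ j, 2 ≤ j → j ≤ n → HasDerivAt (β j) (β (j - 1) t - β j t * r) t) :
    HasDerivAt (fun x => ∑ j ∈ Icc 1 n, β j x)
      (f + (∑ j ∈ Icc 1 n, β j t - β n t) - (∑ j ∈ Icc 1 n, β j t) * r) t := by
  induction n, hn using Nat.le_induction with
  | base => simpa using hβ₁.congr_deriv (by ring)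
  | succ m hm ih =>
    simp only [sum_Icc_succ_top (by omega : 1 ≤ m + 1)]
    refine ((ih fun j hj hjm => hβ j hj (by omega)).fun_add
      (hβ (m + 1) (by omega) le_rfl)).congr_deriv ?_
    rw [Nat.add_sub_cancel]
    ring

theorem le_mul_exp_of_hasDerivAt_le_neg_div {f f' : ℝ → ℝ} {τ T t : ℝ}
    (hf : ∀ x, T ≤ x → HasDerivAt f (f' x) x) (hf' : ∀ x, T ≤ x → f' x ≤ -f x / τ)
    (ht : T ≤ t) :
    f t ≤ f T * exp (-(t - T) / τ) := by
  have hcont : ContinuousOn f (Set.Icc T t) := fun x hx =>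
    (hf x hx.1).continuousAt.continuousWithinAt
  have := le_gronwallBound_of_liminf_deriv_right_le (K := -τ⁻¹) (ε := 0) hcont
    (fun x hx _ hr => (hf x hx.1).hasDerivWithinAt.liminf_right_slope_le hr) le_rfl
    (fun x hx => (hf' x hx.1).trans_eq (by ring)) t ⟨ht, le_rfl⟩
  rwa [gronwallBound_ε0, neg_mul, inv_mul_eq_div, ← neg_div] at this

theorem lambda₂_drift_le {s a d b bₙ g r : ℝ} (hs : 32 ≤ s) (ha : 0 ≤ a) (hd : 0 ≤ d)
    (hb : 0 ≤ b) (hbₙ : 0 ≤ bₙ) (hg : 1 - 2 / s ≤ g) (hr : 1 + 1 / (4 * s) ≤ r)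
    (hb64 : b ≤ 1 / 64) :
    (-(a / 2) * (g - b) + d * b) + ((a / 2) * (g - b) + ((1 / s - a - d) / 2) * b - d * g) / 16
        + (a / 2 * g + (b - bₙ) - b * r) / 4
      ≤ -(a + d / 16 + b / 4) / (8 * s) := by
  have hs0 : 0 < s := by linarith
  have he : 1 / s ≤ 1 / 32 := one_div_le_one_div_of_le (by norm_num) hs
  have hg' : 1 - 2 * (1 / s) ≤ g := by rwa [mul_one_div]
  have hr' : 1 + (1 / s) / 4 ≤ r := by rwa [show 1 / s / 4 = 1 / (4 * s) by ring]
  have hα : a * (14 * b - 11 * g) / 32 ≤ a * (-(1 / s) / 8) := by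
    rw [mul_div_assoc]; exact mul_le_mul_of_nonneg_left (by linarith) ha
  have hδ : d * (31 * b / 32 - g / 16) ≤ d * (-(1 / s) / 128) :=
    mul_le_mul_of_nonneg_left (by linarith) hd
  have hB : b * ((1 / s) / 32 + 1 / 4 - r / 4) ≤ b * (-(1 / s) / 32) :=
    mul_le_mul_of_nonneg_left (by linarith) hb
  calc _ = a * (14 * b - 11 * g) / 32 + d * (31 * b / 32 - g / 16)
          + b * ((1 / s) / 32 + 1 / 4 - r / 4) - bₙ / 4 := by ring
    _ ≤ a * (-(1 / s) / 8) + d * (-(1 / s) / 128) + b * (-(1 / s) / 32) := by linarith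
    _ = _ := by field_simp; ring

theorem stmt_13_general
    (s : ℕ) (hs : 32 ≤ s)
    (α δ : ℝ → ℝ) (β : ℕ → ℝ → ℝ) (B Γ R : ℝ → ℝ)
    (hB : ∀ t, B t = ∑ j ∈ Finset.Icc 1 (8*s), β j t)
    (hderivα : ∀ t : ℝ, 0 ≤ t → HasDerivAt α (-(α t / 2) * (Γ t - B t) + δ t * B t) t)
    (hderivδ : ∀ t : ℝ, 0 ≤ t →
      HasDerivAt δ ((α t / 2) * (Γ t - B t) + ((1/(s:ℝ) - α t - δ t)/2) * B t - δ t * Γ t) t)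
    (hderivβ1 : ∀ t : ℝ, 0 ≤ t → HasDerivAt (β 1) (-(β 1 t) * R t + (α t / 2) * Γ t) t)
    (hderivβ : ∀ j, 2 ≤ j → j ≤ 8*s → ∀ t : ℝ, 0 ≤ t →
      HasDerivAt (β j) (β (j-1) t - β j t * R t) t)
    (T₁ : ℝ) (hT₁ : 0 ≤ T₁)
    (hαt : ∀ t : ℝ, T₁ ≤ t → 0 ≤ α t)
    (hδt : ∀ t : ℝ, T₁ ≤ t → 0 ≤ δ t)
    (hβt : ∀ t : ℝ, T₁ ≤ t → ∀ j, 1 ≤ j → j ≤ 8*s → 0 ≤ β j t)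
    (hΓt : ∀ t : ℝ, T₁ ≤ t → 1 - 2/(s:ℝ) ≤ Γ t ∧ Γ t ≤ 1)
    (hRt : ∀ t : ℝ, T₁ ≤ t → 1 + 1/(4*(s:ℝ)) ≤ R t)
    (hBt : ∀ t : ℝ, T₁ ≤ t → B t ≤ 1/64) :
    (∀ t : ℝ, T₁ ≤ t →
      deriv (fun x => α x + δ x / 16 + B x / 4) t ≤
        -(α t + δ t / 16 + B t / 4) / (8*(s:ℝ))) ∧
    (∀ t : ℝ, T₁ ≤ t →
      α t + δ t / 16 + B t / 4 ≤
        (α T₁ + δ T₁ / 16 + B T₁ / 4) * Real.exp (-(t - T₁)/(8*(s:ℝ)))) := by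
  have hs' : (32 : ℝ) ≤ s := by exact_mod_cast hs
  have hderivB : ∀ t, 0 ≤ t →
      HasDerivAt B (α t / 2 * Γ t + (B t - β (8 * s) t) - B t * R t) t := fun t ht => by
    simpa only [← hB] using hasDerivAt_sum_Icc_of_cascade (by omega) (hderivβ1 t ht)
      fun j hj hjn => hderivβ j hj hjn t ht
  set Λ : ℝ → ℝ := fun x => α x + δ x / 16 + B x / 4
  have hΛ : ∀ t, T₁ ≤ t → HasDerivAt Λ (deriv Λ t) t ∧ deriv Λ t ≤ -Λ t / (8 * (s : ℝ)) :=
    fun t ht => by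
      have ht₀ : 0 ≤ t := hT₁.trans ht
      have h := ((hderivα t ht₀).fun_add ((hderivδ t ht₀).div_const 16)).fun_add
        ((hderivB t ht₀).div_const 4)
      have hB₀ : 0 ≤ B t := hB t ▸ sum_nonneg fun j hj =>
        hβt t ht j (mem_Icc.mp hj).1 (mem_Icc.mp hj).2
      rw [h.deriv]
      exact ⟨h, lambda₂_drift_le hs' (hαt t ht) (hδt t ht) hB₀
        (hβt t ht (8 * s) (by omega) le_rfl) (hΓt t ht).1 (hRt t ht) (hBt t ht)⟩
  exact ⟨fun t ht => (hΛ t ht).2, fun t ht =>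
    le_mul_exp_of_hasDerivAt_le_neg_div (fun x hx => (hΛ x hx).1) (fun x hx => (hΛ x hx).2) ht⟩

theorem stmt_13
    (s : ℕ) (hs : 32 ≤ s)
    (α δ : ℝ → ℝ) (β γ : ℕ → ℝ → ℝ) (B Γ u R : ℝ → ℝ)
    (hB : ∀ t, B t = ∑ j ∈ Finset.Icc 1 (8*s), β j t)
    (hΓ : ∀ t, Γ t = ∑ j ∈ Finset.Icc 1 (8*s), γ j t)
    (hu : ∀ t, u t = 1 - 1/(s:ℝ) - Γ t)
    (hR : ∀ t, R t = 1 + 1/(2*(s:ℝ)) - δ t / 2 - u t)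
    (hderivα : ∀ t : ℝ, 0 ≤ t → HasDerivAt α (-(α t / 2) * (Γ t - B t) + δ t * B t) t)
    (hderivδ : ∀ t : ℝ, 0 ≤ t →
      HasDerivAt δ ((α t / 2) * (Γ t - B t) + ((1/(s:ℝ) - α t - δ t)/2) * B t - δ t * Γ t) t)
    (hderivβ1 : ∀ t : ℝ, 0 ≤ t → HasDerivAt (β 1) (-(β 1 t) * R t + (α t / 2) * Γ t) t)
    (hderivβ : ∀ j, 2 ≤ j → j ≤ 8*s → ∀ t : ℝ, 0 ≤ t →
      HasDerivAt (β j) (β (j-1) t - β j t * R t) t)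
    (hderivγ1 : ∀ t : ℝ, 0 ≤ t →
      HasDerivAt (γ 1) (-(γ 1 t) * R t + (1/(2*(s:ℝ)) - δ t / 2) * Γ t) t)
    (hderivγ : ∀ j, 2 ≤ j → j ≤ 8*s → ∀ t : ℝ, 0 ≤ t →
      HasDerivAt (γ j) (γ (j-1) t - γ j t * R t) t)
    (T₁ : ℝ) (hT₁ : 0 ≤ T₁)
    (hαt : ∀ t : ℝ, T₁ ≤ t → 0 ≤ α t)
    (hδt : ∀ t : ℝ, T₁ ≤ t → 0 ≤ δ t)
    (hβt : ∀ t : ℝ, T₁ ≤ t → ∀ j, 1 ≤ j → j ≤ 8*s → 0 ≤ β j t)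
    (hΓt : ∀ t : ℝ, T₁ ≤ t → 1 - 2/(s:ℝ) ≤ Γ t ∧ Γ t ≤ 1)
    (hRt : ∀ t : ℝ, T₁ ≤ t → 1 + 1/(4*(s:ℝ)) ≤ R t)
    (hBt : ∀ t : ℝ, T₁ ≤ t → B t ≤ 1/64) :
    (∀ t : ℝ, T₁ ≤ t →
      deriv (fun x => α x + δ x / 16 + B x / 4) t ≤
        -(α t + δ t / 16 + B t / 4) / (8*(s:ℝ))) ∧
    (∀ t : ℝ, T₁ ≤ t →
      α t + δ t / 16 + B t / 4 ≤
        (α T₁ + δ T₁ / 16 + B T₁ / 4) * Real.exp (-(t - T₁)/(8*(s:ℝ)))) :=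
  stmt_13_general s hs α δ β B Γ R hB hderivα hderivδ hderivβ1 hderivβ T₁ hT₁ hαt hδt hβt hΓt hRt
    hBt
end

section
/- Let s ≥ 32, let T₂ ≥ 0, set ζ₃ = 1/2 − 2/s, d = 2^{1−8s}/s, and a_j = 2^{1−j}/s for 1 ≤ j ≤ 8s+1, and define Λ₃(t) = α(t) + d·δ(t) + Σ_{j=1}^{8s+1} a_j·β_j(t). Assume that for all t ≥ T₂ the variables satisfy α(t) ≥ 0, δ(t) ≥ 0, β_j(t) ≥ 0 for all 1 ≤ j ≤ 8s+1, 1 − 2/s ≤ Γ(t) ≤ 1, R(t) ≥ 1 + 1/(4s), and β(t) ≤ 2^{2−8s}/s². Then Λ₃'(t) ≤ −ζ₃·Λ₃(t) for all t ≥ T₂, and consequently Λ₃(t) ≤ Λ₃(T₂)·e^{−ζ₃(t−T₂)} for all t ≥ T₂. -/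
/-!
Because the weights `a j` halve along the chain `β 1 → β 2 → ⋯ → β (8s+1)`, the transfer terms
in `∑ a j β j'` telescope: the weighted chain sum `S = ∑_{j ≤ 8s} a j β j` has derivative
`a 1 (α Γ / 2) + (1/2 - R) S - a (8s+1) β (8s+1) Γ`. Then `Λ₃' + ζ₃ Λ₃` is a combination of
`α`, `δ`, `S` and `β (8s+1)` whose coefficients are nonpositive under the assumed bounds on `Γ`,
`R` and `β`; the one positive cross term `d B / (2s)` is absorbed by the margin `1/(4s)` in `R`,
since `d ≤ a j` gives `d B ≤ S`. Grönwall's inequality turns `Λ₃' ≤ -ζ₃ Λ₃` into exponential decay.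
-/

open Finset Real

theorem le_mul_exp_of_deriv_le_mul {f : ℝ → ℝ} {K T t : ℝ}
    (hf : ∀ x, T ≤ x → DifferentiableAt ℝ f x) (bound : ∀ x, T ≤ x → deriv f x ≤ K * f x)
    (ht : T ≤ t) : f t ≤ f T * exp (K * (t - T)) := by
  have h := le_gronwallBound_of_liminf_deriv_right_le (ε := 0) (b := t)
    (fun x hx => (hf x hx.1).continuousAt.continuousWithinAt)
    (fun x hx _ hr => (hf x hx.1).hasDerivAt.hasDerivWithinAt.liminf_right_slope_le hr) le_rfl
    (fun x hx => by simpa using bound x hx.1) t ⟨ht, le_rfl⟩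
  rwa [gronwallBound_ε0] at h

theorem mul_sum_le_sum_mul {ι : Type*} {s : Finset ι} {c : ℝ} {a b : ι → ℝ}
    (hc : ∀ i ∈ s, c ≤ a i) (hb : ∀ i ∈ s, 0 ≤ b i) :
    c * ∑ i ∈ s, b i ≤ ∑ i ∈ s, a i * b i := by
  rw [mul_sum]
  exact sum_le_sum fun i hi => mul_le_mul_of_nonneg_right (hc i hi) (hb i hi)

section DyadicWeights

variable {s : ℕ} {a : ℕ → ℝ} {d : ℝ}

theorem dyadic_weight_succ
    (ha : ∀ j, 1 ≤ j → j ≤ 8 * s + 1 → a j = (2:ℝ) ^ ((1:ℤ) - (j:ℤ)) / (s:ℝ))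
    (j : ℕ) (h₁ : 1 ≤ j) (h₂ : j ≤ 8 * s) : a (j + 1) = 1 / 2 * a j := by
  rw [ha _ (by omega) (by omega), ha j h₁ (by omega), Nat.cast_succ, sub_add_eq_sub_sub,
    zpow_sub₀ two_ne_zero, zpow_one]
  ring

theorem le_dyadic_weight
    (ha : ∀ j, 1 ≤ j → j ≤ 8 * s + 1 → a j = (2:ℝ) ^ ((1:ℤ) - (j:ℤ)) / (s:ℝ))
    (hd : d = (2:ℝ) ^ ((1:ℤ) - 8 * (s:ℤ)) / (s:ℝ)) (j : ℕ) (hj : j ∈ Icc 1 (8 * s)) :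
    d ≤ a j := by
  obtain ⟨h₁, h₂⟩ := mem_Icc.1 hj
  rw [hd, ha j h₁ (by omega)]
  gcongr
  exacts [one_le_two, by omega]

end DyadicWeights

section GeometricChain

variable {β : ℕ → ℝ → ℝ} {a : ℕ → ℝ} {q r c f₁ x : ℝ} {N : ℕ}

theorem hasDerivAt_sum_geometric_chain
    (ha : ∀ j, 1 ≤ j → j < N → a (j + 1) = q * a j)
    (h₁ : HasDerivAt (β 1) (-(β 1 x) * r + f₁) x)
    (hstep : ∀ j, 2 ≤ j → j ≤ N → HasDerivAt (β j) (β (j - 1) x - β j x * r) x)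
    {n : ℕ} (hn : 1 ≤ n) (hnN : n ≤ N) :
    HasDerivAt (fun y => ∑ j ∈ Icc 1 n, a j * β j y)
      (a 1 * f₁ + (q - r) * ∑ j ∈ Icc 1 n, a j * β j x - q * a n * β n x) x := by
  induction n, hn using Nat.le_induction with
  | base =>
    simp only [Icc_self, sum_singleton]
    exact (h₁.const_mul (a 1)).congr_deriv (by ring)
  | succ n hn ih =>
    simp only [sum_Icc_succ_top (by omega : 1 ≤ n + 1)]
    refine ((ih (by omega)).add ((hstep (n + 1) (by omega) hnN).const_mul _)).congr_deriv ?_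
    rw [ha n hn (by omega), Nat.add_sub_cancel]
    ring

theorem hasDerivAt_sum_geometric_chain_sink
    (ha : ∀ j, 1 ≤ j → j ≤ N → a (j + 1) = q * a j)
    (h₁ : HasDerivAt (β 1) (-(β 1 x) * r + f₁) x)
    (hstep : ∀ j, 2 ≤ j → j ≤ N → HasDerivAt (β j) (β (j - 1) x - β j x * r) x)
    (hsink : HasDerivAt (β (N + 1)) (β N x - β (N + 1) x * c) x) (hN : 1 ≤ N) :
    HasDerivAt (fun y => ∑ j ∈ Icc 1 (N + 1), a j * β j y)
      (a 1 * f₁ + (q - r) * ∑ j ∈ Icc 1 N, a j * β j x - a (N + 1) * β (N + 1) x * c) x := by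
  simp only [sum_Icc_succ_top (by omega : 1 ≤ N + 1)]
  refine ((hasDerivAt_sum_geometric_chain (fun j hj hjN => ha j hj hjN.le) h₁ hstep hN
    le_rfl).add (hsink.const_mul _)).congr_deriv ?_
  rw [ha N hN le_rfl]
  ring

end GeometricChain

theorem lyapunov_rate_le {s p ζ A D S b G B R : ℝ} (hs : 32 ≤ s) (hp : 0 < p)
    (hp' : p ≤ 1 / 256) (hζ : ζ ≤ 1 / 2 - 2 / s) (hA : 0 ≤ A) (hD : 0 ≤ D) (hb : 0 ≤ b)
    (hG : 1 - 2 / s ≤ G) (hR : 1 + 1 / (4 * s) ≤ R) (hB : 0 ≤ B)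
    (hB' : B ≤ 4 * p / s ^ 2) (hS : 2 * p / s * B ≤ S) :
    (-(A / 2) * (G - B) + D * B)
      + 2 * p / s * ((A / 2) * (G - B) + ((1 / s - A - D) / 2) * B - D * G)
      + (1 / s * (A / 2 * G) + (1 / 2 - R) * S - p / s * b * G)
      ≤ -ζ * (A + 2 * p / s * D + (S + p / s * b)) := by
  have hσ : 0 < s⁻¹ := by positivity
  have hσ' : s⁻¹ ≤ 1 / 32 := by rw [one_div]; exact inv_anti₀ (by norm_num) hs
  simp only [div_eq_mul_inv, one_mul, mul_inv, ← inv_pow] at *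
  generalize s⁻¹ = σ at *
  -- the coefficient of `G` is negative, so the worst case is `G = 1 - 2σ`
  have hα : A * (-(G - B) / 2 + p * σ * (G - B) - p * σ * B + G * σ / 2 + ζ) ≤ 0 :=
    mul_nonpos_of_nonneg_of_nonpos hA (by
      nlinarith [mul_nonneg (sub_nonneg.2 hG) (by nlinarith : (0:ℝ) ≤ 1/2 - p*σ - σ/2),
        mul_le_mul_of_nonneg_right hB' (by nlinarith : (0:ℝ) ≤ 1/2 - 2*p*σ),
        mul_pos hp hσ, mul_nonneg (mul_nonneg hp.le hσ.le) hσ.le])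
  have hδ : D * (B - p * σ * B - 2 * p * σ * G + ζ * (2 * p * σ)) ≤ 0 :=
    mul_nonpos_of_nonneg_of_nonpos hD (by
      nlinarith [mul_le_mul_of_nonneg_left hG (by positivity : (0:ℝ) ≤ 2*p*σ),
        mul_nonneg (mul_nonneg hp.le hσ.le) hB, mul_nonneg (mul_nonneg hp.le hσ.le) hσ.le])
  have hS0 : 0 ≤ S := le_trans (by positivity) hS
  have hSR : S * (1 / 2 - R + ζ + σ / 2) ≤ 0 :=
    mul_nonpos_of_nonneg_of_nonpos hS0 (by linarith)
  have hsink : p * σ * b * (ζ - G) ≤ 0 :=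
    mul_nonpos_of_nonneg_of_nonpos (by positivity) (by linarith)
  linear_combination hα + hδ + hSR + hsink + σ / 2 * hS

theorem stmt_15_general
    (s : ℕ) (hs : 32 ≤ s)
    (α δ : ℝ → ℝ) (β : ℕ → ℝ → ℝ) (B Γ R : ℝ → ℝ)
    (hB : ∀ t, B t = ∑ j ∈ Finset.Icc 1 (8*s), β j t)
    (hderivα : ∀ t : ℝ, 0 ≤ t → HasDerivAt α (-(α t / 2) * (Γ t - B t) + δ t * B t) t)
    (hderivδ : ∀ t : ℝ, 0 ≤ t →
      HasDerivAt δ ((α t / 2) * (Γ t - B t) + ((1/(s:ℝ) - α t - δ t)/2) * B t - δ t * Γ t) t)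
    (hderivβ1 : ∀ t : ℝ, 0 ≤ t → HasDerivAt (β 1) (-(β 1 t) * R t + (α t / 2) * Γ t) t)
    (hderivβ : ∀ j, 2 ≤ j → j ≤ 8*s → ∀ t : ℝ, 0 ≤ t →
      HasDerivAt (β j) (β (j-1) t - β j t * R t) t)
    (hderivβlast : ∀ t : ℝ, 0 ≤ t →
      HasDerivAt (β (8*s+1)) (β (8*s) t - β (8*s+1) t * Γ t) t)
    (T₂ : ℝ) (hT₂ : 0 ≤ T₂)
    (ζ₃ d : ℝ) (a : ℕ → ℝ)
    (hζ₃ : ζ₃ = 1/2 - 2/(s:ℝ))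
    (hd : d = (2:ℝ)^((1:ℤ) - 8*(s:ℤ)) / (s:ℝ))
    (ha : ∀ j, 1 ≤ j → j ≤ 8*s+1 → a j = (2:ℝ)^((1:ℤ) - (j:ℤ)) / (s:ℝ))
    (hαt : ∀ t : ℝ, T₂ ≤ t → 0 ≤ α t)
    (hδt : ∀ t : ℝ, T₂ ≤ t → 0 ≤ δ t)
    (hβt : ∀ t : ℝ, T₂ ≤ t → ∀ j, 1 ≤ j → j ≤ 8*s+1 → 0 ≤ β j t)
    (hΓt : ∀ t : ℝ, T₂ ≤ t → 1 - 2/(s:ℝ) ≤ Γ t ∧ Γ t ≤ 1)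
    (hRt : ∀ t : ℝ, T₂ ≤ t → 1 + 1/(4*(s:ℝ)) ≤ R t)
    (hBt : ∀ t : ℝ, T₂ ≤ t → B t ≤ (2:ℝ)^((2:ℤ) - 8*(s:ℤ)) / (s:ℝ)^2) :
    (∀ t : ℝ, T₂ ≤ t →
      deriv (fun x => α x + d * δ x + ∑ j ∈ Finset.Icc 1 (8*s+1), a j * β j x) t ≤
        -ζ₃ * (α t + d * δ t + ∑ j ∈ Finset.Icc 1 (8*s+1), a j * β j t)) ∧
    (∀ t : ℝ, T₂ ≤ t →
      α t + d * δ t + ∑ j ∈ Finset.Icc 1 (8*s+1), a j * β j t ≤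
        (α T₂ + d * δ T₂ + ∑ j ∈ Finset.Icc 1 (8*s+1), a j * β j T₂) *
          Real.exp (-ζ₃ * (t - T₂))) := by

  set p : ℝ := (2:ℝ) ^ (-(8 * (s:ℤ)))
  have hp : 0 < p := by positivity
  have hp' : p ≤ 1 / 256 :=
    (zpow_le_zpow_right₀ one_le_two (by omega : -(8 * (s:ℤ)) ≤ -8)).trans_eq (by norm_num)
  have ha₁ : a 1 = 1 / s := by rw [ha 1 le_rfl (by omega)]; norm_num
  have haN : a (8 * s + 1) = p / s := by
    rw [ha _ (by omega) le_rfl, show (1:ℤ) - ((8 * s + 1 : ℕ) : ℤ) = -(8 * s) by push_cast; ring]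
  have hd' : d = 2 * p / s := by rw [hd, sub_eq_add_neg, zpow_add₀ two_ne_zero, zpow_one]
  have hB' : ∀ t, T₂ ≤ t → B t ≤ 4 * p / s ^ 2 := by
    rw [← show (2:ℝ) ^ ((2:ℤ) - 8 * (s:ℤ)) = 4 * p by
      rw [sub_eq_add_neg, zpow_add₀ two_ne_zero, show (2:ℝ) ^ (2:ℤ) = 4 by norm_num]]
    exact hBt
  set Λ := fun x => α x + d * δ x + ∑ j ∈ Icc 1 (8 * s + 1), a j * β j x
  have hΛ : ∀ t, 0 ≤ t → HasDerivAt Λ _ t := fun t ht =>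
    ((hderivα t ht).add ((hderivδ t ht).const_mul d)).add
      (hasDerivAt_sum_geometric_chain_sink (dyadic_weight_succ ha) (hderivβ1 t ht)
        (fun j h₁ h₂ => hderivβ j h₁ h₂ t ht) (hderivβlast t ht) (by omega))
  have hrate : ∀ t, T₂ ≤ t → deriv Λ t ≤ -ζ₃ * Λ t := by
    intro t ht
    have hβ : ∀ j ∈ Icc 1 (8 * s), 0 ≤ β j t := fun j hj =>
      hβt t ht j (mem_Icc.1 hj).1 (by linarith [(mem_Icc.1 hj).2])
    have hdS := hB t ▸ mul_sum_le_sum_mul (le_dyadic_weight ha hd) hβ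
    rw [(hΛ t (hT₂.trans ht)).deriv]
    dsimp only [Λ]
    rw [sum_Icc_succ_top (by omega), ha₁, haN, hd']
    rw [hd'] at hdS
    exact lyapunov_rate_le (by exact_mod_cast hs) hp hp' hζ₃.le (hαt t ht) (hδt t ht)
      (hβt t ht _ (by omega) le_rfl) (hΓt t ht).1 (hRt t ht) (hB t ▸ sum_nonneg hβ)
      (hB' t ht) hdS
  exact ⟨hrate, fun t ht =>
    le_mul_exp_of_deriv_le_mul (fun x hx => (hΛ x (hT₂.trans hx)).differentiableAt) hrate ht⟩

theorem stmt_15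
    (s : ℕ) (hs : 32 ≤ s)
    (α δ : ℝ → ℝ) (β γ : ℕ → ℝ → ℝ) (B Γ u R : ℝ → ℝ)
    (hB : ∀ t, B t = ∑ j ∈ Finset.Icc 1 (8*s), β j t)
    (hΓ : ∀ t, Γ t = ∑ j ∈ Finset.Icc 1 (8*s), γ j t)
    (hu : ∀ t, u t = 1 - 1/(s:ℝ) - Γ t)
    (hR : ∀ t, R t = 1 + 1/(2*(s:ℝ)) - δ t / 2 - u t)
    (hderivα : ∀ t : ℝ, 0 ≤ t → HasDerivAt α (-(α t / 2) * (Γ t - B t) + δ t * B t) t)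
    (hderivδ : ∀ t : ℝ, 0 ≤ t →
      HasDerivAt δ ((α t / 2) * (Γ t - B t) + ((1/(s:ℝ) - α t - δ t)/2) * B t - δ t * Γ t) t)
    (hderivβ1 : ∀ t : ℝ, 0 ≤ t → HasDerivAt (β 1) (-(β 1 t) * R t + (α t / 2) * Γ t) t)
    (hderivβ : ∀ j, 2 ≤ j → j ≤ 8*s → ∀ t : ℝ, 0 ≤ t →
      HasDerivAt (β j) (β (j-1) t - β j t * R t) t)
    (hderivγ1 : ∀ t : ℝ, 0 ≤ t →
      HasDerivAt (γ 1) (-(γ 1 t) * R t + (1/(2*(s:ℝ)) - δ t / 2) * Γ t) t)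
    (hderivγ : ∀ j, 2 ≤ j → j ≤ 8*s → ∀ t : ℝ, 0 ≤ t →
      HasDerivAt (γ j) (γ (j-1) t - γ j t * R t) t)
    (hderivβlast : ∀ t : ℝ, 0 ≤ t →
      HasDerivAt (β (8*s+1)) (β (8*s) t - β (8*s+1) t * Γ t) t)
    (T₂ : ℝ) (hT₂ : 0 ≤ T₂)
    (ζ₃ d : ℝ) (a : ℕ → ℝ)
    (hζ₃ : ζ₃ = 1/2 - 2/(s:ℝ))
    (hd : d = (2:ℝ)^((1:ℤ) - 8*(s:ℤ)) / (s:ℝ))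
    (ha : ∀ j, 1 ≤ j → j ≤ 8*s+1 → a j = (2:ℝ)^((1:ℤ) - (j:ℤ)) / (s:ℝ))
    (hαt : ∀ t : ℝ, T₂ ≤ t → 0 ≤ α t)
    (hδt : ∀ t : ℝ, T₂ ≤ t → 0 ≤ δ t)
    (hβt : ∀ t : ℝ, T₂ ≤ t → ∀ j, 1 ≤ j → j ≤ 8*s+1 → 0 ≤ β j t)
    (hΓt : ∀ t : ℝ, T₂ ≤ t → 1 - 2/(s:ℝ) ≤ Γ t ∧ Γ t ≤ 1)
    (hRt : ∀ t : ℝ, T₂ ≤ t → 1 + 1/(4*(s:ℝ)) ≤ R t)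
    (hBt : ∀ t : ℝ, T₂ ≤ t → B t ≤ (2:ℝ)^((2:ℤ) - 8*(s:ℤ)) / (s:ℝ)^2) :
    (∀ t : ℝ, T₂ ≤ t →
      deriv (fun x => α x + d * δ x + ∑ j ∈ Finset.Icc 1 (8*s+1), a j * β j x) t ≤
        -ζ₃ * (α t + d * δ t + ∑ j ∈ Finset.Icc 1 (8*s+1), a j * β j t)) ∧
    (∀ t : ℝ, T₂ ≤ t →
      α t + d * δ t + ∑ j ∈ Finset.Icc 1 (8*s+1), a j * β j t ≤
        (α T₂ + d * δ T₂ + ∑ j ∈ Finset.Icc 1 (8*s+1), a j * β j T₂) *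
          Real.exp (-ζ₃ * (t - T₂))) :=
  stmt_15_general s hs α δ β B Γ R hB hderivα hderivδ hderivβ1 hderivβ hderivβlast T₂ hT₂ ζ₃ d a hζ₃
    hd ha hαt hδt hβt hΓt hRt hBt
end
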